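/- arXiv:2311.15285 — 10 statements merged into one kernel-verified Lean document; each statement's English description precedes it below -/
import Mathlib

section
/- For all even nonnegative integers v₁ and all real m > 0: ∑_{q=1}^∞ (-1)^q/((q²+m²) q^{v₁}) = ((-1)^{v₁/2}/m^{v₁}) · (mπ/sinh(mπ) - 1)/(2m²) + ∑_{j=0}^{v₁/2 - 1} ((-1)^j/m^{2+2j}) (2^{1-(v₁-2j)} - 1) ζ(v₁ - 2j). -/
/-!
The partial fraction identity
`1/((q²+m²) q^(2v+2)) = (q^(-(2v+2)) - 1/((q²+m²) q^(2v))) / m²`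
expresses the sum for `v + 1` through the sum for `v` and the alternating zeta value
`∑ (-1)^q q^(-(2v+2)) = (2^(-2v-1) - 1) ζ(2v+2)`; unrolling this recursion produces the finite
ζ-sum. The case `v = 0` is the cosecant expansion `π / sin (π x) = 1/x + ∑ (-1)^n 2x/(x² - n²)`
at `x = i m`, obtained from the Mittag-Leffler expansion of `cot` through
`1 / sin x = cot (x/2) - cot x`. The alternating zeta value and the cosecant expansion both come
from `∑ (-1)^n f n = 2 ∑ f (2n) - ∑ f n`.
-/

open Complex Real

theorem HasSum.neg_one_pow_mul {R : Type*} [Ring R] [TopologicalSpace R] [IsTopologicalRing R]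
    {f : ℕ → R} {a b : R} (hf : HasSum f a) (heven : HasSum (fun n ↦ f (2 * n)) b) :
    HasSum (fun n ↦ (-1) ^ n * f n) (2 * b - a) := by
  have hind : HasSum (fun n ↦ if Even n then f n else 0) b := by
    rw [← (mul_right_injective₀ (two_ne_zero' ℕ)).hasSum_iff]
    · simpa [Function.comp_def] using heven
    · rintro n hn
      rw [if_neg]
      rintro ⟨k, rfl⟩
      exact hn ⟨k, two_mul k⟩
  refine ((hind.mul_left 2).sub hf).congr_fun fun n ↦ ?_
  rcases Nat.even_or_odd n with h | h
  · rw [if_pos h, h.neg_one_pow]; noncomm_ring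
  · rw [if_neg (Nat.not_even_iff_odd.mpr h), h.neg_one_pow]; noncomm_ring

-- The `n = 0` term is `1 / 0 = 0`.
theorem hasSum_neg_one_pow_div_nat_pow {k : ℕ} (hk : 1 < k) :
    HasSum (fun n : ℕ ↦ (-1 : ℂ) ^ n / (n : ℂ) ^ k)
      ((2 ^ ((1 : ℤ) - k) - 1) * riemannZeta k) := by
  have hzeta : HasSum (fun n : ℕ ↦ 1 / (n : ℂ) ^ k) (riemannZeta k) := by
    rw [zeta_nat_eq_tsum_of_gt_one hk]
    refine Summable.hasSum (Summable.of_norm ?_)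
    simpa using Real.summable_one_div_nat_pow.mpr hk
  have heven : HasSum (fun n : ℕ ↦ 1 / ((2 * n : ℕ) : ℂ) ^ k) ((2 ^ k)⁻¹ * riemannZeta k) :=
    (hzeta.mul_left _).congr_fun fun n ↦ by push_cast; rw [mul_pow]; field_simp
  have hval : (2 : ℂ) ^ ((1 : ℤ) - k) = 2 * (2 ^ k)⁻¹ := by
    rw [zpow_sub₀ two_ne_zero, zpow_one, zpow_natCast, div_eq_mul_inv]
  rw [hval, sub_one_mul, mul_assoc]
  exact (hzeta.neg_one_pow_mul heven).congr_fun fun n ↦ (mul_one_div _ _).symm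

theorem Complex.div_two_mem_integerComplement {x : ℂ} (hx : x ∈ integerComplement) :
    x / 2 ∈ integerComplement := by
  rintro ⟨n, hn⟩
  exact hx ⟨2 * n, by push_cast; rw [hn]; ring⟩

theorem Complex.cot_div_two_sub_cot {x : ℂ} (hx : sin x ≠ 0) :
    cot (x / 2) - cot x = 1 / sin x := by
  obtain ⟨y, rfl⟩ : ∃ y, x = 2 * y := ⟨x / 2, by ring⟩
  rw [sin_two_mul, mul_assoc] at hx
  have hsin : sin y ≠ 0 := left_ne_zero_of_mul (right_ne_zero_of_mul hx)
  have hcos : cos y ≠ 0 := right_ne_zero_of_mul (right_ne_zero_of_mul hx)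
  rw [mul_div_cancel_left₀ y two_ne_zero, cot_eq_cos_div_sin, cot_eq_cos_div_sin, sin_two_mul,
    cos_two_mul]
  field_simp
  ring

theorem hasSum_one_div_sub_add_one_div_add {x : ℂ} (hx : x ∈ integerComplement) :
    HasSum (fun n : ℕ ↦ 1 / (x - n) + 1 / (x + n)) (π * cot (π * x) + 1 / x) := by
  rw [← hasSum_nat_add_iff' 1]
  have h := (summable_cotTerm hx).hasSum
  rw [← cot_series_rep' hx] at h
  rw [Finset.sum_range_one, Nat.cast_zero, sub_zero, add_zero,
    show π * cot (π * x) + 1 / x - (1 / x + 1 / x) = π * cot (π * x) - 1 / x by ring]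
  simpa [cotTerm] using h

theorem hasSum_neg_one_pow_mul_one_div_sub_add_one_div_add {x : ℂ} (hx : x ∈ integerComplement) :
    HasSum (fun n : ℕ ↦ (-1) ^ n * (1 / (x - n) + 1 / (x + n))) (π / sin (π * x) + 1 / x) := by
  have heven : HasSum (fun n : ℕ ↦ 1 / (x - (2 * n : ℕ)) + 1 / (x + (2 * n : ℕ)))
      (2⁻¹ * (π * cot (π * (x / 2)) + 1 / (x / 2))) := by
    refine ((hasSum_one_div_sub_add_one_div_add (div_two_mem_integerComplement hx)).mul_left
      2⁻¹).congr_fun fun n ↦ ?_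
    have h₁ := integerComplement_add_ne_zero hx (-(2 * n : ℕ))
    have h₂ := integerComplement_add_ne_zero hx (2 * n : ℕ)
    push_cast at h₁ h₂ ⊢
    rw [← sub_eq_add_neg] at h₁
    field_simp
  have hval : π / sin (π * x) + 1 / x =
      2 * (2⁻¹ * (π * cot (π * (x / 2)) + 1 / (x / 2))) - (π * cot (π * x) + 1 / x) := by
    rw [div_eq_mul_one_div, ← cot_div_two_sub_cot (sin_pi_mul_ne_zero hx), mul_div_assoc]
    ring
  rw [hval]
  exact (hasSum_one_div_sub_add_one_div_add hx).neg_one_pow_mul heven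

theorem hasSum_neg_one_pow_div_nat_sq_add_sq {m : ℝ} (hm : m ≠ 0) :
    HasSum (fun n : ℕ ↦ (-1 : ℂ) ^ n / ((n : ℂ) ^ 2 + (m : ℂ) ^ 2))
      (((π / Real.sinh (π * m) + 1 / m) / (2 * m) : ℝ) : ℂ) := by
  have hx : (m : ℂ) * I ∈ integerComplement := by
    rintro ⟨n, hn⟩
    exact hm (by simpa using (congrArg im hn).symm)
  have hsin : sin (π * (m * I)) = Real.sinh (π * m) * I := by
    rw [← mul_assoc, sin_mul_I, ofReal_sinh, ofReal_mul]
  have hsinh : (Real.sinh (π * m) : ℂ) ≠ 0 := by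
    simpa [hsin] using sin_pi_mul_ne_zero hx
  have hmC : (m : ℂ) ≠ 0 := ofReal_ne_zero.mpr hm
  have hval : (((π / Real.sinh (π * m) + 1 / m) / (2 * m) : ℝ) : ℂ) =
      I / (2 * m) * (π / sin (π * (m * I)) + 1 / (m * I)) := by
    rw [hsin]
    push_cast
    field_simp
  rw [hval]
  refine ((hasSum_neg_one_pow_mul_one_div_sub_add_one_div_add hx).mul_left _).congr_fun fun n ↦ ?_
  have h₁ := integerComplement_add_ne_zero hx (-n)
  have h₂ := integerComplement_add_ne_zero hx n
  push_cast at h₁ h₂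
  rw [← sub_eq_add_neg] at h₁
  have h₃ : (n : ℂ) ^ 2 + (m : ℂ) ^ 2 = -((m * I - n) * (m * I + n)) := by
    linear_combination (m : ℂ) ^ 2 * I_sq
  rw [h₃]
  field_simp
  linear_combination -2 * (m : ℂ) * I_sq

theorem hasSum_neg_one_pow_succ_div_succ_pow {k : ℕ} (hk : 1 < k) :
    HasSum (fun q : ℕ ↦ (-1 : ℂ) ^ (q + 1) / ((q : ℂ) + 1) ^ k)
      ((2 ^ ((1 : ℤ) - k) - 1) * riemannZeta k) := by
  have h := (hasSum_nat_add_iff' 1).mpr (hasSum_neg_one_pow_div_nat_pow hk)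
  rw [Finset.sum_range_one, Nat.cast_zero, zero_pow (by omega), div_zero, sub_zero] at h
  simpa using h

theorem hasSum_neg_one_pow_succ_div_succ_sq_add_sq {m : ℝ} (hm : m ≠ 0) :
    HasSum (fun q : ℕ ↦ (-1 : ℂ) ^ (q + 1) / (((q : ℂ) + 1) ^ 2 + (m : ℂ) ^ 2))
      (((m * π * (1 / Real.sinh (m * π)) - 1) / (2 * m ^ 2) : ℝ) : ℂ) := by
  have h := (hasSum_nat_add_iff' 1).mpr (hasSum_neg_one_pow_div_nat_sq_add_sq hm)
  have hmC : (m : ℂ) ≠ 0 := ofReal_ne_zero.mpr hm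
  have hval : (((m * π * (1 / Real.sinh (m * π)) - 1) / (2 * m ^ 2) : ℝ) : ℂ) =
      (((π / Real.sinh (π * m) + 1 / m) / (2 * m) : ℝ) : ℂ) - 1 / (m : ℂ) ^ 2 := by
    push_cast
    rw [mul_comm (m : ℂ) π]
    field_simp
    ring
  rw [hval]
  simpa using h

theorem one_div_sq_add_mul_pow_succ {K : Type*} [Field K] {x c : K} (hx : x ≠ 0)
    (hxc : x ^ 2 + c ≠ 0) (hc : c ≠ 0) (k : ℕ) :
    1 / ((x ^ 2 + c) * x ^ (2 * (k + 1))) =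
      (1 / x ^ (2 * (k + 1)) - 1 / ((x ^ 2 + c) * x ^ (2 * k))) / c := by
  rw [mul_add, mul_one, pow_add]
  field_simp
  ring

theorem HasSum.neg_one_pow_succ_div_succ_sq_add_sq_mul_pow_succ {m : ℝ} (hm : m ≠ 0) {v : ℕ}
    {T η : ℂ}
    (hT : HasSum (fun q : ℕ ↦ (-1 : ℂ) ^ (q + 1) /
      ((((q : ℂ) + 1) ^ 2 + (m : ℂ) ^ 2) * ((q : ℂ) + 1) ^ (2 * v))) T)
    (hη : HasSum (fun q : ℕ ↦ (-1 : ℂ) ^ (q + 1) / ((q : ℂ) + 1) ^ (2 * (v + 1))) η) :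
    HasSum (fun q : ℕ ↦ (-1 : ℂ) ^ (q + 1) /
      ((((q : ℂ) + 1) ^ 2 + (m : ℂ) ^ 2) * ((q : ℂ) + 1) ^ (2 * (v + 1)))) ((η - T) / m ^ 2) := by
  refine ((hη.sub hT).div_const _).congr_fun fun q ↦ ?_
  have hq : (q : ℂ) + 1 ≠ 0 := Nat.cast_add_one_ne_zero q
  have hqm : ((q : ℂ) + 1) ^ 2 + (m : ℂ) ^ 2 ≠ 0 := by
    exact_mod_cast (by positivity : ((q : ℝ) + 1) ^ 2 + m ^ 2 ≠ 0)
  have hm2 : (m : ℂ) ^ 2 ≠ 0 := pow_ne_zero 2 (ofReal_ne_zero.mpr hm)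
  rw [div_eq_mul_one_div, one_div_sq_add_mul_pow_succ hq hqm hm2]
  ring

theorem eq_neg_one_pow_div_pow_mul_add_sum_of_eq_sub_div {K : Type*} [Field K] {c : K}
    {T e : ℕ → K} (h : ∀ v, T (v + 1) = (e (v + 1) - T v) / c) (v : ℕ) :
    T v = (-1) ^ v / c ^ v * T 0 + ∑ j ∈ Finset.range v, (-1) ^ j / c ^ (j + 1) * e (v - j) := by
  induction v with
  | zero => simp
  | succ v ih =>
    have hshift (k : ℕ) : (-1) ^ (k + 1) / c ^ (k + 1 + 1) * e (v + 1 - (k + 1)) =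
        -((-1) ^ k / c ^ (k + 1) * e (v - k)) / c := by
      rw [Nat.add_sub_add_right]
      ring
    rw [h, ih, Finset.sum_range_succ', Nat.sub_zero, Finset.sum_congr rfl fun k _ ↦ hshift k,
      ← Finset.sum_div, Finset.sum_neg_distrib]
    ring

/-- For all even nonnegative integers `v₁ = 2v` and all real `m > 0`:
`∑_{q=1}^∞ (-1)^q/((q²+m²) q^{v₁}) = ((-1)^{v₁/2}/m^{v₁}) (mπ/sinh(mπ) - 1)/(2m²)
  + ∑_{j=0}^{v₁/2-1} ((-1)^j/m^{2+2j}) (2^{1-(v₁-2j)} - 1) ζ(v₁-2j)`. -/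
theorem alternating_sum_one_div_sq_add_sq_mul_pow
    (v : ℕ) (m : ℝ) (hm : 0 < m) :
    ∑' q : ℕ, (-1 : ℂ) ^ (q + 1) /
        ((((q : ℂ) + 1) ^ 2 + (m : ℂ) ^ 2) * ((q : ℂ) + 1) ^ (2 * v)) =
      ((-1 : ℂ) ^ v / (m : ℂ) ^ (2 * v)) *
        (((m * Real.pi * (1 / Real.sinh (m * Real.pi)) - 1) / (2 * m ^ 2) : ℝ) : ℂ)
      + ∑ j ∈ Finset.range v,
          ((-1 : ℂ) ^ j / (m : ℂ) ^ (2 + 2 * j)) *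
            ((2 : ℂ) ^ ((1 : ℤ) - (2 * (v : ℤ) - 2 * (j : ℤ))) - 1) *
            riemannZeta ((2 * v - 2 * j : ℕ) : ℂ) := by
  set T : ℕ → ℂ := fun v ↦ ∑' q : ℕ, (-1 : ℂ) ^ (q + 1) /
    ((((q : ℂ) + 1) ^ 2 + (m : ℂ) ^ 2) * ((q : ℂ) + 1) ^ (2 * v))
  set e : ℕ → ℂ := fun k ↦ (2 ^ ((1 : ℤ) - (2 * k : ℕ)) - 1) * riemannZeta (2 * k : ℕ)
  have hη (v : ℕ) := hasSum_neg_one_pow_succ_div_succ_pow (k := 2 * (v + 1)) (by omega)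
  have hbase := hasSum_neg_one_pow_succ_div_succ_sq_add_sq hm.ne'
  have hsummable (v : ℕ) : Summable fun q : ℕ ↦ (-1 : ℂ) ^ (q + 1) /
      ((((q : ℂ) + 1) ^ 2 + (m : ℂ) ^ 2) * ((q : ℂ) + 1) ^ (2 * v)) := by
    induction v with
    | zero => simpa using hbase.summable
    | succ v ih =>
      exact (ih.hasSum.neg_one_pow_succ_div_succ_sq_add_sq_mul_pow_succ hm.ne' (hη v)).summable
  have hrec (v : ℕ) : T (v + 1) = (e (v + 1) - T v) / (m : ℂ) ^ 2 :=
    ((hsummable v).hasSum.neg_one_pow_succ_div_succ_sq_add_sq_mul_pow_succ hm.ne' (hη v)).tsum_eq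
  have h0 : T 0 = (((m * Real.pi * (1 / Real.sinh (m * Real.pi)) - 1) / (2 * m ^ 2) : ℝ) : ℂ) := by
    simpa [T] using hbase.tsum_eq
  change T v = _
  rw [eq_neg_one_pow_div_pow_mul_add_sum_of_eq_sub_div hrec, h0, pow_mul]
  congr 1
  refine Finset.sum_congr rfl fun j hj ↦ ?_
  have hjv : j ≤ v := (Finset.mem_range.mp hj).le
  have hexp : (((2 * (v - j) : ℕ)) : ℤ) = 2 * (v : ℤ) - 2 * (j : ℤ) := by omega
  simp only [e]
  rw [← pow_mul, show 2 * (j + 1) = 2 + 2 * j by ring, hexp,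
    show 2 * (v - j) = 2 * v - 2 * j by omega]
  ring
end

section
/- For all even nonnegative integers v₁ and all real m > 0: ∑_{q odd, q≥1} 1/((q²+m²) q^{v₁}) = ((-1)^{v₁/2}/m^{v₁}) · π tanh(mπ/2)/(4m) + ∑_{j=0}^{v₁/2 - 1} ((-1)^j/m^{2+2j}) (1 - 2^{-(v₁-2j)}) ζ(v₁ - 2j). -/
/-!
The Mittag-Leffler expansion of `π cot (π x)` gives
`∑_{n ≥ 1} 1 / (x² - n²) = (π cot (π x) - 1/x) / (2x)`. The even terms form the same series at
`x / 2`, so removing them and using `2 cot (2y) - cot y = -tan y` gives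
`∑_{q odd} 1 / (x² - q²) = -π tan (π x / 2) / (4x)`; at `x = m i` this is the case `v = 0`.
For general `v`, partial fractions write `1 / ((q² + m²) q^{2v})` as `(-1/m²)^v / (q² + m²)` plus
a combination of the `q^{-(2v-2j)}`, and the odd part of `ζ(k)` is `(1 - 2^{-k}) ζ(k)` because
its even part is `2^{-k} ζ(k)`.
-/

open Real Complex Finset

theorem HasSum.even_of_hasSum_odd {α : Type*} [AddCommGroup α] [UniformSpace α]
    [IsUniformAddGroup α] [CompleteSpace α] [T2Space α] {f : ℕ → α} {a b : α}
    (hf : HasSum f a) (hodd : HasSum (fun k ↦ f (2 * k + 1)) b) :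
    HasSum (fun k ↦ f (2 * k)) (a - b) := by
  have heven : Summable fun k ↦ f (2 * k) :=
    hf.summable.comp_injective (mul_right_injective₀ two_ne_zero)
  rw [← (heven.hasSum.even_add_odd hodd).unique hf, add_sub_cancel_right]
  exact heven.hasSum

theorem hasSum_one_div_nat_add_one_pow_riemannZeta {k : ℕ} (hk : 1 < k) :
    HasSum (fun n : ℕ ↦ 1 / ((n : ℂ) + 1) ^ k) (riemannZeta k) := by
  have hk' : 1 < (k : ℂ).re := by simpa using hk
  have hs := (summable_nat_add_iff 1).mpr (Complex.summable_one_div_nat_cpow.mpr hk')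
  rw [zeta_eq_tsum_one_div_nat_add_one_cpow hk']
  simpa [cpow_natCast] using hs.hasSum

theorem hasSum_one_div_two_mul_add_one_pow {k : ℕ} (hk : 1 < k) :
    HasSum (fun n : ℕ ↦ 1 / (2 * (n : ℂ) + 1) ^ k)
      ((1 - 2 ^ (-(k : ℤ))) * riemannZeta k) := by
  have hζ := hasSum_one_div_nat_add_one_pow_riemannZeta hk
  have hodd : HasSum (fun n : ℕ ↦ 1 / (((2 * n + 1 : ℕ) : ℂ) + 1) ^ k)
      (2 ^ (-(k : ℤ)) * riemannZeta k) := by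
    refine (hζ.mul_left _).congr_fun fun n ↦ ?_
    rw [zpow_neg, zpow_natCast, Nat.cast_add_one, Nat.cast_mul, Nat.cast_two,
      show 2 * (n : ℂ) + 1 + 1 = 2 * (n + 1) by ring, mul_pow]
    field_simp
  rw [sub_mul, one_mul]
  refine (hζ.even_of_hasSum_odd hodd).congr_fun fun n ↦ ?_
  push_cast
  rfl

theorem hasSum_one_div_sq_sub_nat_add_one_sq {x : ℂ} (hx : x ∈ integerComplement) :
    HasSum (fun n : ℕ ↦ 1 / (x ^ 2 - ((n : ℂ) + 1) ^ 2))
      ((π * cot (π * x) - 1 / x) / (2 * x)) := by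
  have hcot : HasSum (cotTerm x) (π * cot (π * x) - 1 / x) := by
    rw [cot_series_rep' hx]; exact (summable_cotTerm hx).hasSum
  have hx0 := integerComplement.ne_zero hx
  refine (hcot.div_const (2 * x)).congr_fun fun n ↦ ?_
  rw [cotTerm_identity hx n]
  field_simp
  ring

theorem Complex.two_mul_cot_two_mul_sub_cot {y : ℂ} (hs : sin y ≠ 0) (hc : cos y ≠ 0) :
    2 * cot (2 * y) - cot y = -tan y := by
  rw [Complex.cot_eq_cos_div_sin, Complex.cot_eq_cos_div_sin, Complex.tan_eq_sin_div_cos,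
    Complex.sin_two_mul, Complex.cos_two_mul]
  field_simp
  linear_combination sin_sq_add_cos_sq y

theorem hasSum_one_div_sq_sub_two_mul_add_one_sq {x : ℂ} (hx : x ∈ integerComplement) :
    HasSum (fun n : ℕ ↦ 1 / (x ^ 2 - (2 * (n : ℂ) + 1) ^ 2))
      (-(π * tan (π * x / 2)) / (4 * x)) := by
  have hx2 : x / 2 ∈ integerComplement := by
    rintro ⟨n, hn⟩
    exact hx ⟨2 * n, by push_cast; rw [hn]; ring⟩
  have hodd : HasSum (fun n : ℕ ↦ 1 / (x ^ 2 - (((2 * n + 1 : ℕ) : ℂ) + 1) ^ 2))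
      ((π * cot (π * (x / 2)) - 1 / (x / 2)) / (2 * (x / 2)) / 4) := by
    refine ((hasSum_one_div_sq_sub_nat_add_one_sq hx2).div_const 4).congr_fun fun n ↦ ?_
    push_cast
    rw [div_div, div_pow]
    ring_nf
  have hx0 := integerComplement.ne_zero hx
  have hs : sin (π * x / 2) ≠ 0 := by
    simpa [mul_div_assoc] using sin_pi_mul_ne_zero hx2
  have hc : cos (π * x / 2) ≠ 0 := by
    intro h
    apply sin_pi_mul_ne_zero hx
    rw [show π * x = 2 * (π * x / 2) by ring, Complex.sin_two_mul, h, mul_zero]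
  have hval : (π * cot (π * x) - 1 / x) / (2 * x) - (π * cot (π * (x / 2)) - 1 / (x / 2)) /
      (2 * (x / 2)) / 4 = -(π * tan (π * x / 2)) / (4 * x) := by
    have h := Complex.two_mul_cot_two_mul_sub_cot hs hc
    rw [show 2 * (π * x / 2) = π * x by ring] at h
    rw [show π * (x / 2) = π * x / 2 by ring]
    field_simp
    linear_combination 2 * π * x * h
  rw [← hval]
  refine ((hasSum_one_div_sq_sub_nat_add_one_sq hx).even_of_hasSum_odd hodd).congr_fun fun n ↦ ?_
  push_cast
  rfl

theorem hasSum_one_div_two_mul_add_one_sq_add_sq {m : ℝ} (hm : m ≠ 0) :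
    HasSum (fun n : ℕ ↦ 1 / ((2 * (n : ℂ) + 1) ^ 2 + m ^ 2))
      ((π * Real.tanh (m * π / 2) / (4 * m) : ℝ) : ℂ) := by
  have hmI : (m : ℂ) * I ∈ integerComplement := by
    rintro ⟨n, hn⟩
    exact hm (by simpa using (congrArg im hn).symm)
  have hval : -(-(π * tan (π * (m * I) / 2)) / (4 * (m * I))) =
      ((π * Real.tanh (m * π / 2) / (4 * m) : ℝ) : ℂ) := by
    rw [show π * (m * I) / 2 = (m * π / 2 : ℂ) * I by ring, tan_mul_I]
    push_cast
    field_simp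
  rw [← hval]
  refine (hasSum_one_div_sq_sub_two_mul_add_one_sq hmI).neg.congr_fun fun n ↦ ?_
  rw [mul_pow, I_sq, show (m : ℂ) ^ 2 * -1 - (2 * n + 1) ^ 2 = -((2 * n + 1) ^ 2 + m ^ 2) by ring,
    div_neg, neg_neg]

theorem one_div_sq_add_sq_mul_pow_eq {K : Type*} [Field K] {q c : K} (hq : q ≠ 0) (hc : c ≠ 0)
    (hqc : q ^ 2 + c ^ 2 ≠ 0) (v : ℕ) :
    1 / ((q ^ 2 + c ^ 2) * q ^ (2 * v)) =
      (-1) ^ v / c ^ (2 * v) * (1 / (q ^ 2 + c ^ 2)) +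
        ∑ j ∈ range v, (-1) ^ j / c ^ (2 + 2 * j) * (1 / q ^ (2 * v - 2 * j)) := by
  induction v with
  | zero => simp
  | succ v ih =>
    have hstep : 1 / ((q ^ 2 + c ^ 2) * q ^ (2 * (v + 1))) =
        1 / c ^ 2 * (1 / q ^ (2 * v + 2)) - 1 / c ^ 2 * (1 / ((q ^ 2 + c ^ 2) * q ^ (2 * v))) := by
      field_simp
      ring
    have hsum : ∑ j ∈ range v, (-1) ^ (j + 1) / c ^ (2 + 2 * (j + 1)) *
        (1 / q ^ (2 * (v + 1) - 2 * (j + 1))) =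
        -(1 / c ^ 2) *
          ∑ j ∈ range v, (-1) ^ j / c ^ (2 + 2 * j) * (1 / q ^ (2 * v - 2 * j)) := by
      rw [mul_sum]
      refine sum_congr rfl fun j _ ↦ ?_
      rw [show 2 * (v + 1) - 2 * (j + 1) = 2 * v - 2 * j by omega,
        show 2 + 2 * (j + 1) = 2 + 2 * j + 2 by ring, pow_succ, pow_add]
      field_simp
    rw [hstep, ih, sum_range_succ', hsum, show 2 * (v + 1) = 2 * v + 2 by ring]
    simp only [mul_zero, add_zero, Nat.sub_zero, pow_zero]
    rw [pow_succ, pow_add]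
    ring

/-- For all even nonnegative integers `v₁ = 2v` and all real `m > 0`:
`∑_{q odd, q ≥ 1} 1/((q²+m²) q^{v₁}) = ((-1)^{v₁/2}/m^{v₁}) π tanh(mπ/2)/(4m)
  + ∑_{j=0}^{v₁/2-1} ((-1)^j/m^{2+2j}) (1 - 2^{-(v₁-2j)}) ζ(v₁-2j)`. -/
theorem odd_sum_one_div_sq_add_sq_mul_pow
    (v : ℕ) (m : ℝ) (hm : 0 < m) :
    ∑' q : ℕ, (1 : ℂ) /
        (((2 * (q : ℂ) + 1) ^ 2 + (m : ℂ) ^ 2) * (2 * (q : ℂ) + 1) ^ (2 * v)) =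
      ((-1 : ℂ) ^ v / (m : ℂ) ^ (2 * v)) *
        ((Real.pi * Real.tanh (m * Real.pi / 2) / (4 * m) : ℝ) : ℂ)
      + ∑ j ∈ Finset.range v,
          ((-1 : ℂ) ^ j / (m : ℂ) ^ (2 + 2 * j)) *
            (1 - (2 : ℂ) ^ (-(2 * (v : ℤ) - 2 * (j : ℤ)))) *
            riemannZeta ((2 * v - 2 * j : ℕ) : ℂ) := by
  have hq (q : ℕ) : 2 * (q : ℂ) + 1 ≠ 0 := by exact_mod_cast (2 * q).succ_ne_zero
  have hqm (q : ℕ) : (2 * (q : ℂ) + 1) ^ 2 + (m : ℂ) ^ 2 ≠ 0 := by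
    exact_mod_cast (by positivity : (2 * (q : ℝ) + 1) ^ 2 + m ^ 2 ≠ 0)
  have hm0 : (m : ℂ) ≠ 0 := ofReal_ne_zero.mpr hm.ne'
  have hzeta (j : ℕ) (hj : j ∈ range v) :=
    (hasSum_one_div_two_mul_add_one_pow (k := 2 * v - 2 * j)
      (by have := mem_range.mp hj; omega)).mul_left ((-1 : ℂ) ^ j / (m : ℂ) ^ (2 + 2 * j))
  have hsum := ((hasSum_one_div_two_mul_add_one_sq_add_sq hm.ne').mul_left
    ((-1 : ℂ) ^ v / (m : ℂ) ^ (2 * v))).add (hasSum_sum hzeta)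
  rw [tsum_congr fun q ↦ one_div_sq_add_sq_mul_pow_eq (hq q) hm0 (hqm q) v, hsum.tsum_eq]
  congr 1
  refine sum_congr rfl fun j hj ↦ ?_
  rw [mul_assoc, Nat.cast_sub (by have := mem_range.mp hj; omega)]
  push_cast
  rfl
end

section
/- Let b ∈ ℕ_{>0} and k ∈ {0,…,b−1}. Define the lower-triangular matrices A, B of size (b−k+1)×(b−k+1), indexed by i,j ∈ {0,…,b−k}, by A_{ij} = C(2k+2i, i−j) for i ≥ j (0 otherwise), and B_{ij} = (−1)^{i−j} · 2(k+i)/(i−j)! · (2k+i+j−1)!/(2k+2j)! for i ≥ j (0 otherwise). Then B·A equals the identity matrix. -/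
/-!
Below the diagonal, write `i = j + m` with `m ≥ 1` and substitute `l = j + t`. Cancelling the
factorials, the `(i, j)` entry of `B * A` becomes `2 (k + i) / m!` times
`∑ t ≤ m, (-1)^(m-t) C(m, t) p(t)` with `p(t) = (2k+2j+t+1) ⋯ (2k+i+j+t-1)`, a polynomial of
degree `m - 1` in `t`. This is the `m`-th forward difference of `p` at `0`, hence zero.
On the diagonal, `B_ii = 2(k+i) (2k+2i-1)! / (2k+2i)! = 1 = A_ii`.
-/

open Polynomial Finset
open scoped Nat

theorem Polynomial.sum_range_neg_one_pow_mul_choose_mul_eval_eq_zero {R : Type*} [CommRing R]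
    {P : R[X]} {n : ℕ} (hP : P.natDegree < n) :
    ∑ t ∈ range (n + 1), (-1 : R) ^ (n - t) * n.choose t * P.eval (t : R) = 0 := by
  have h := fwdDiff_iter_eq_sum_shift (h := (1 : R)) P.eval n 0
  rw [fwdDiff_iter_eq_zero_of_degree_lt hP] at h
  simpa [zsmul_eq_mul] using h.symm

theorem sum_range_neg_one_pow_mul_choose_mul_ascFactorial {R : Type*} [CommRing R]
    (a : ℕ) {m : ℕ} (hm : 1 ≤ m) :
    ∑ t ∈ range (m + 1), (-1 : R) ^ (m - t) * m.choose t * ((a + t + 1).ascFactorial (m - 1) : R)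
      = 0 := by
  -- computed over `ℤ`, where `ascPochhammer` has exact degree, and then cast to `R`
  have hdeg : ((ascPochhammer ℤ (m - 1)).comp (X + C ((a + 1 : ℕ) : ℤ))).natDegree < m := by
    rw [natDegree_comp, ascPochhammer_natDegree, natDegree_X_add_C]
    omega
  have hℤ := sum_range_neg_one_pow_mul_choose_mul_eval_eq_zero hdeg
  simp only [eval_comp, eval_add, eval_X, eval_C, ← Nat.cast_add,
    ascPochhammer_nat_eq_natCast_ascFactorial] at hℤ
  simp_rw [show ∀ t, a + t + 1 = t + (a + 1) from fun t => by omega]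
  simpa using congrArg (Int.cast : ℤ → R) hℤ

def binomLower (k i j : ℕ) : ℚ :=
  if j ≤ i then ((2 * k + 2 * i).choose (i - j) : ℚ) else 0

def binomLowerInv (k i j : ℕ) : ℚ :=
  if j ≤ i then
    (if 2 * k + i + j = 0 then 1 else
      (-1 : ℚ) ^ (i - j) * (2 * (k + i) : ℚ) / ((i - j)! : ℚ)
        * ((2 * k + i + j - 1)! : ℚ) / ((2 * k + 2 * j)! : ℚ))
  else 0

theorem binomLowerInv_mul_binomLower_self (k i : ℕ) :
    binomLowerInv k i i * binomLower k i i = 1 := by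
  rw [binomLowerInv, binomLower, if_pos le_rfl, if_pos le_rfl, Nat.sub_self, Nat.choose_zero_right]
  split_ifs with h0
  · simp
  · obtain ⟨n, hn⟩ : ∃ n, 2 * k + 2 * i = n + 1 := ⟨2 * k + 2 * i - 1, by omega⟩
    rw [show 2 * k + i + i - 1 = n by omega, hn, Nat.factorial_succ]
    have hcast : (2 * (k + i) : ℚ) = n + 1 := by exact_mod_cast (by omega : 2 * (k + i) = n + 1)
    push_cast
    rw [hcast, Nat.factorial_zero, Nat.cast_one]
    field_simp

theorem binomLowerInv_mul_binomLower_eq_ascFactorial (k j : ℕ) {m t : ℕ} (hm : 1 ≤ m) (ht : t ≤ m) :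
    binomLowerInv k (j + m) (j + t) * binomLower k (j + t) j
      = 2 * (k + j + m) / (m ! : ℚ) *
        ((-1) ^ (m - t) * m.choose t * ((2 * k + 2 * j + t + 1).ascFactorial (m - 1) : ℚ)) := by
  set a := 2 * k + 2 * j + t
  rw [binomLowerInv, binomLower, if_pos (by omega), if_neg (by omega), if_pos (by omega),
    show j + m - (j + t) = m - t by omega, show 2 * k + (j + m) + (j + t) - 1 = a + (m - 1) by omega,
    show 2 * k + 2 * (j + t) = a + t by omega, show j + t - j = t by omega]
  have hasc : ((a + (m - 1))! : ℚ) = a ! * (a + 1).ascFactorial (m - 1) := by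
    exact_mod_cast (Nat.factorial_mul_ascFactorial a (m - 1)).symm
  rw [Nat.cast_choose ℚ (le_add_self : t ≤ a + t), Nat.cast_choose ℚ ht, hasc, Nat.add_sub_cancel]
  push_cast
  field_simp
  ring

theorem sum_binomLowerInv_mul_binomLower (k : ℕ) {N i : ℕ} (j : ℕ) (hi : i < N) :
    ∑ l ∈ range N, binomLowerInv k i l * binomLower k l j = if i = j then 1 else 0 := by
  have hsupp : ∑ l ∈ Ico j (i + 1), binomLowerInv k i l * binomLower k l j
      = ∑ l ∈ range N, binomLowerInv k i l * binomLower k l j := by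
    refine sum_subset (fun l hl => mem_range.2 (by grind)) fun l _ hl => ?_
    rcases lt_or_ge l j with hlj | hjl
    · rw [binomLower, if_neg (by omega), mul_zero]
    · rw [binomLowerInv, if_neg (by grind), zero_mul]
  rw [← hsupp, sum_Ico_eq_sum_range]
  rcases lt_or_ge i j with hij | hji
  · rw [if_neg (by omega), show i + 1 - j = 0 by omega, sum_range_zero]
  obtain ⟨m, rfl⟩ := Nat.exists_eq_add_of_le hji
  rw [show j + m + 1 - j = m + 1 by omega]
  rcases m.eq_zero_or_pos with rfl | hm
  · simp [binomLowerInv_mul_binomLower_self]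
  rw [if_neg (by omega), sum_congr rfl fun t ht =>
      binomLowerInv_mul_binomLower_eq_ascFactorial k j hm (Nat.lt_succ_iff.1 (mem_range.1 ht)),
    ← mul_sum, sum_range_neg_one_pow_mul_choose_mul_ascFactorial _ hm, mul_zero]

theorem inverse_of_binomial_triangular_matrix_general (b k : ℕ) :
    let A : Matrix (Fin (b - k + 1)) (Fin (b - k + 1)) ℚ :=
      fun i j => if (j : ℕ) ≤ (i : ℕ) then
          ((2 * k + 2 * (i : ℕ)).choose ((i : ℕ) - (j : ℕ)) : ℚ)
        else 0
    let B : Matrix (Fin (b - k + 1)) (Fin (b - k + 1)) ℚ :=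
      fun i j => if (j : ℕ) ≤ (i : ℕ) then
          (if 2 * k + (i : ℕ) + (j : ℕ) = 0 then 1 else
            (-1 : ℚ) ^ ((i : ℕ) - (j : ℕ)) * (2 * (k + (i : ℕ)) : ℚ)
              / (Nat.factorial ((i : ℕ) - (j : ℕ)) : ℚ)
              * (Nat.factorial (2 * k + (i : ℕ) + (j : ℕ) - 1) : ℚ)
              / (Nat.factorial (2 * k + 2 * (j : ℕ)) : ℚ))
        else 0
    B * A = 1 := by
  intro A B
  ext i j
  calc (B * A) i j = ∑ l ∈ range (b - k + 1), binomLowerInv k i l * binomLower k l j := by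
        rw [Matrix.mul_apply]
        exact Fin.sum_univ_eq_sum_range (fun l => binomLowerInv k i l * binomLower k l j) _
    _ = if (i : ℕ) = j then 1 else 0 := sum_binomLowerInv_mul_binomLower k j i.isLt
    _ = (1 : Matrix (Fin (b - k + 1)) (Fin (b - k + 1)) ℚ) i j := by
        simp [Matrix.one_apply, Fin.val_inj]

/-- Let `b ≥ 1` and `k ∈ {0,…,b−1}`. Define lower-triangular `(b−k+1)×(b−k+1)` matrices
`A_{ij} = C(2k+2i, i−j)` and
`B_{ij} = (−1)^{i−j} · 2(k+i)/(i−j)! · (2k+i+j−1)!/(2k+2j)!` for `i ≥ j`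
(entries `0` for `i < j`; at the single degenerate corner `2k+i+j = 0`, where the
formula reads `2·0·(−1)!/0!`, the entry is interpreted as its simplified value `1`,
as in the paper). Then `B·A` is the identity matrix. -/
theorem inverse_of_binomial_triangular_matrix (b k : ℕ) (hb : 0 < b) (hk : k ≤ b - 1) :
    let A : Matrix (Fin (b - k + 1)) (Fin (b - k + 1)) ℚ :=
      fun i j => if (j : ℕ) ≤ (i : ℕ) then
          ((2 * k + 2 * (i : ℕ)).choose ((i : ℕ) - (j : ℕ)) : ℚ)
        else 0
    let B : Matrix (Fin (b - k + 1)) (Fin (b - k + 1)) ℚ :=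
      fun i j => if (j : ℕ) ≤ (i : ℕ) then
          (if 2 * k + (i : ℕ) + (j : ℕ) = 0 then 1 else
            (-1 : ℚ) ^ ((i : ℕ) - (j : ℕ)) * (2 * (k + (i : ℕ)) : ℚ)
              / (Nat.factorial ((i : ℕ) - (j : ℕ)) : ℚ)
              * (Nat.factorial (2 * k + (i : ℕ) + (j : ℕ) - 1) : ℚ)
              / (Nat.factorial (2 * k + 2 * (j : ℕ)) : ℚ))
        else 0
    B * A = 1 :=
  inverse_of_binomial_triangular_matrix_general b k
end

section
/- Fix integers b ≥ 1 and 0 ≤ k ≤ b−1. There exist real numbers d_k^{(k)},…,d_b^{(k)} (given explicitly by d_ℓ^{(k)} = C(2ℓ, ℓ−k)/(b+ℓ) + 2ℓ ∑_{m=0}^{ℓ−k−1} (−1)^{ℓ−k−m}/(b+k+m) · (k+ℓ+m−1)!/(m!(2k+m)!(ℓ−k−m)!)) such that for every even nonnegative integer n = 2q with k ≤ q ≤ b: (1/(q+b)) C(2q, q−k) = ∑_{ℓ=k}^{q} d_ℓ^{(k)} C(2q, q−ℓ). -/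
open Finset Polynomial Nat

/-!
With `c j = 1 / ((b + j) (j - k)! (j + k)!)` the paper's coefficient is
`d ℓ = c ℓ (2ℓ)! + ∑_{k ≤ j < ℓ} c j T(ℓ, j)`, `T = chebyshevCoeff`. Exchanging the double sum,
the identity holds for arbitrary weights `c` as soon as
`(2j)! C(2q, q-j) + ∑_{j < ℓ ≤ q} T(ℓ, j) C(2q, q-ℓ) = 0` for `j < q`. This is the inversion of
`(2 cos θ)^{2q} = C(2q, q) + ∑_{ℓ ≥ 1} C(2q, q-ℓ) 2 cos (2ℓθ)`, proved by finite differences: the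
`2q`-th difference of `p(t) = (t+j)(t+j-1)⋯(t-j+1)`, of degree `2j < 2q`, vanishes at `-q`, and the
symmetry `p(-t) = p(t-1)` folds the sum onto `0 ≤ ℓ ≤ q` with weights
`p(ℓ) + p(ℓ-1) = 2ℓ (ℓ+j-1)! / (ℓ-j)!`.
-/

theorem neg_one_pow_sub {R : Type*} [Monoid R] [HasDistribNeg R] {m n : ℕ} (h : n ≤ m) :
    (-1 : R) ^ (m - n) = (-1) ^ m * (-1) ^ n := by
  rw [← Nat.sub_add_cancel h, Nat.add_sub_cancel, pow_add, mul_assoc, ← pow_add, ← two_mul,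
    pow_mul, neg_one_sq, one_pow, mul_one]

theorem Finset.sum_range_two_mul_add_one {M : Type*} [AddCommMonoid M] (f : ℕ → M) (q : ℕ) :
    ∑ i ∈ range (2 * q + 1), f i
      = ∑ ℓ ∈ range (q + 1), f (q + ℓ) + ∑ ℓ ∈ Ioc 0 q, f (q - ℓ) := by
  rw [two_mul, add_assoc, sum_range_add, add_comm]
  congr 1
  refine sum_nbij' (q - ·) (q - ·) ?_ ?_ ?_ ?_ ?_ <;> intro i hi <;>
    simp only [mem_range, mem_Ioc] at hi
  · simp only [mem_Ioc]; omega
  · simp only [mem_range]; omega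
  · omega
  · omega
  · rw [Nat.sub_sub_self hi.le]

theorem Polynomial.sum_neg_one_pow_mul_choose_mul_eval_eq_zero {R : Type*} [CommRing R]
    {P : R[X]} {q : ℕ} (hP : P.natDegree < 2 * q) :
    ∑ ℓ ∈ range (q + 1), (-1) ^ ℓ * ((2 * q).choose (q - ℓ) : R) * P.eval (ℓ : R)
      + ∑ ℓ ∈ Ioc 0 q, (-1) ^ ℓ * ((2 * q).choose (q - ℓ) : R) * P.eval (-ℓ : R) = 0 := by
  have h := congr_fun (fwdDiff_iter_eq_zero_of_degree_lt hP) (-q)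
  rw [fwdDiff_iter_eq_sum_shift, sum_range_two_mul_add_one, Pi.zero_apply] at h
  rw [← (isUnit_neg_one.pow q).mul_right_eq_zero, mul_add, mul_sum, mul_sum, ← h]
  congr 1 <;> refine sum_congr rfl fun ℓ hℓ => ?_ <;>
    simp only [mem_range, mem_Ioc, Nat.lt_succ_iff] at hℓ
  · rw [show 2 * q - (q + ℓ) = q - ℓ by omega, neg_one_pow_sub hℓ,
      Nat.choose_symm_of_eq_add (by omega : 2 * q = (q + ℓ) + (q - ℓ))]
    simp only [zsmul_eq_mul, nsmul_one]
    rw [show -(q : R) + ((q + ℓ : ℕ) : R) = ℓ by push_cast; ring]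
    push_cast
    ring
  · rw [show 2 * q - (q - ℓ) = q + ℓ by omega, pow_add]
    simp only [zsmul_eq_mul, nsmul_one]
    rw [show -(q : R) + ((q - ℓ : ℕ) : R) = -ℓ by push_cast [Nat.cast_sub hℓ.2]; ring]
    push_cast
    ring

theorem descPochhammer_eval_sub_one_sub {R : Type*} [CommRing R] (n : ℕ) (r : R) :
    (descPochhammer R n).eval ((n : R) - 1 - r) = (-1) ^ n * (descPochhammer R n).eval r := by
  rw [descPochhammer_eval_eq_ascPochhammer, ← ascPochhammer_eval_neg_eq_descPochhammer]
  ring_nf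

theorem natDegree_descPochhammer_le (R : Type*) [CommRing R] (n : ℕ) :
    (descPochhammer R n).natDegree ≤ n := by
  rw [← descPochhammer_map (Int.castRingHom R)]
  exact (natDegree_map_le).trans (descPochhammer_natDegree ℤ n).le

/-- For `j < ℓ`, `(2j)!` times the coefficient of `(2 cos θ)^(2j)` in `2 cos (2ℓθ)`. -/
def chebyshevCoeff (R : Type*) [Ring R] (ℓ j : ℕ) : R :=
  (-1) ^ (ℓ - j) * ((ℓ + j).descFactorial (2 * j) + (ℓ - 1 + j).descFactorial (2 * j) : ℕ)

theorem factorial_mul_choose_add_sum_chebyshevCoeff_mul_choose_eq_zero {R : Type*} [CommRing R]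
    {j q : ℕ} (h : j < q) :
    ((2 * j)! : R) * (2 * q).choose (q - j)
      + ∑ ℓ ∈ Ioc j q, chebyshevCoeff R ℓ j * (2 * q).choose (q - ℓ) = 0 := by
  set P := taylor (j : R) (descPochhammer R (2 * j))
  have hP : P.natDegree < 2 * q := by
    rw [natDegree_taylor]; exact (natDegree_descPochhammer_le R _).trans_lt (by omega)
  have eval_natCast (ℓ : ℕ) : P.eval (ℓ : R) = (ℓ + j).descFactorial (2 * j) := by
    rw [taylor_eval, ← Nat.cast_add, descPochhammer_eval_eq_descFactorial]
  have eval_neg (ℓ : ℕ) (hℓ : 0 < ℓ) : P.eval (-ℓ : R) = (ℓ - 1 + j).descFactorial (2 * j) := by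
    rw [taylor_eval, show (-ℓ : R) + j = ((2 * j : ℕ) : R) - 1 - ((ℓ - 1 + j : ℕ) : R) by
        push_cast [Nat.cast_sub (Nat.one_le_of_lt hℓ)]; ring,
      descPochhammer_eval_sub_one_sub, descPochhammer_eval_eq_descFactorial, pow_mul, neg_one_sq,
      one_pow, one_mul]
  have H := sum_neg_one_pow_mul_choose_mul_eval_eq_zero hP
  rw [← sum_subset (s₁ := Icc j q) (s₂ := range (q + 1))
      (fun ℓ hℓ => by simp only [mem_Icc, mem_range] at hℓ ⊢; omega)
      (fun ℓ hq hj => by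
        simp only [mem_Icc, mem_range] at hq hj
        rw [eval_natCast, descFactorial_eq_zero_iff_lt.mpr (by omega), Nat.cast_zero,
          mul_zero]),
    ← sum_subset (s₁ := Ioc j q) (s₂ := Ioc 0 q)
      (fun ℓ hℓ => by simp only [mem_Ioc] at hℓ ⊢; omega)
      (fun ℓ hq hj => by
        simp only [mem_Ioc] at hq hj
        rw [eval_neg ℓ hq.1, descFactorial_eq_zero_iff_lt.mpr (by omega), Nat.cast_zero,
          mul_zero]),
    Icc_eq_cons_Ioc h.le, sum_cons, eval_natCast, add_assoc, ← sum_add_distrib] at H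
  rw [← (isUnit_neg_one.pow j).mul_right_eq_zero, ← H, mul_add, mul_sum]
  congr 1
  · rw [← two_mul, descFactorial_self]; ring
  · refine sum_congr rfl fun ℓ hℓ => ?_
    simp only [mem_Ioc] at hℓ
    rw [eval_natCast, eval_neg ℓ (by omega), chebyshevCoeff,
      show (-1 : R) ^ ℓ = (-1) ^ j * (-1) ^ (ℓ - j) by
        rw [← pow_add, Nat.add_sub_cancel' hℓ.1.le]]
    push_cast; ring

theorem descFactorial_add_descFactorial_mul_factorial {j ℓ : ℕ} (h : j < ℓ) :
    ((ℓ + j).descFactorial (2 * j) + (ℓ - 1 + j).descFactorial (2 * j)) * (ℓ - j)!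
      = 2 * ℓ * (ℓ + j - 1)! := by
  obtain ⟨t, rfl⟩ := Nat.exists_eq_add_of_lt h
  have h1 := factorial_mul_descFactorial (n := 2 * j + t + 1) (k := 2 * j) (by omega)
  have h2 := factorial_mul_descFactorial (n := 2 * j + t) (k := 2 * j) (by omega)
  rw [show 2 * j + t + 1 - 2 * j = t + 1 by omega, factorial_succ] at h1
  rw [show 2 * j + t - 2 * j = t by omega] at h2
  rw [show j + t + 1 + j = 2 * j + t + 1 by omega, show j + t + 1 - 1 + j = 2 * j + t by omega,
    show j + t + 1 - j = t + 1 by omega, show 2 * j + t + 1 - 1 = 2 * j + t by omega,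
    factorial_succ t]
  rw [factorial_succ] at h1
  linear_combination h1 + (t + 1) * h2

theorem sum_Icc_mul_eq_of_triangular {R : Type*} [CommSemiring R] {k q : ℕ} (hkq : k ≤ q)
    (A D c : ℕ → R) (T : ℕ → ℕ → R)
    (h : ∀ j ∈ Ico k q, D j * A j + ∑ ℓ ∈ Ioc j q, T ℓ j * A ℓ = 0) :
    ∑ ℓ ∈ Icc k q, (c ℓ * D ℓ + ∑ j ∈ Ico k ℓ, c j * T ℓ j) * A ℓ = c q * D q * A q := by
  have swap : ∑ ℓ ∈ Icc k q, ∑ j ∈ Ico k ℓ, c j * T ℓ j * A ℓ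
      = ∑ j ∈ Ico k q, ∑ ℓ ∈ Ioc j q, c j * T ℓ j * A ℓ :=
    sum_comm' fun ℓ j => by simp only [mem_Icc, mem_Ico, mem_Ioc]; omega
  calc _ = ∑ ℓ ∈ Icc k q, c ℓ * D ℓ * A ℓ
          + ∑ j ∈ Ico k q, ∑ ℓ ∈ Ioc j q, c j * T ℓ j * A ℓ := by
        simp only [add_mul, sum_add_distrib, sum_mul, swap]
    _ = ∑ j ∈ Ico k q, c j * (D j * A j + ∑ ℓ ∈ Ioc j q, T ℓ j * A ℓ) + c q * D q * A q := by
        rw [Icc_eq_cons_Ico hkq, sum_cons, add_comm (c q * D q * A q), add_right_comm,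
          ← sum_add_distrib]
        simp only [mul_add, mul_sum, mul_assoc]
    _ = c q * D q * A q := by rw [sum_eq_zero fun j hj => by rw [h j hj, mul_zero], zero_add]

theorem coeff_eq_sum_chebyshevCoeff {K : Type*} [Field K] [CharZero K] (b : K) {k ℓ : ℕ}
    (hkℓ : k ≤ ℓ) :
    ((2 * ℓ).choose (ℓ - k) : K) / (b + ℓ)
      + 2 * (ℓ : K) * ∑ m ∈ range (ℓ - k), (-1 : K) ^ (ℓ - k - m) / (b + k + m)
          * ((k + ℓ + m - 1)! : K) / ((m ! : K) * ((2 * k + m)! : K) * ((ℓ - k - m)! : K))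
      = (b + ℓ)⁻¹ / ((ℓ - k)! * (ℓ + k)!) * (2 * ℓ)!
        + ∑ j ∈ Ico k ℓ, (b + j)⁻¹ / ((j - k)! * (j + k)!) * chebyshevCoeff K ℓ j := by
  rw [sum_Ico_eq_sum_range, mul_sum]
  congr 1
  · rw [cast_choose K (by omega : ℓ - k ≤ 2 * ℓ), show 2 * ℓ - (ℓ - k) = ℓ + k by omega]
    ring
  · refine sum_congr rfl fun m hm => ?_
    have hj : k + m < ℓ := by rw [mem_range] at hm; omega
    have h : (((ℓ + (k + m)).descFactorial (2 * (k + m))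
        + (ℓ - 1 + (k + m)).descFactorial (2 * (k + m)) : ℕ) : K)
        = 2 * ℓ * (ℓ + (k + m) - 1)! / (ℓ - (k + m))! :=
      eq_div_of_mul_eq (Nat.cast_ne_zero.mpr (factorial_ne_zero _))
        (by exact_mod_cast descFactorial_add_descFactorial_mul_factorial hj)
    rw [chebyshevCoeff, h,
      show ℓ - k - m = ℓ - (k + m) by omega, show k + ℓ + m - 1 = ℓ + (k + m) - 1 by omega,
      show 2 * k + m = k + m + k by omega, Nat.add_sub_cancel_left]
    push_cast
    ring

theorem exists_coeffs_binomial_identity_general (b k : ℕ) :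
    ∃ d : ℕ → ℝ,
      (∀ ℓ : ℕ, k ≤ ℓ → ℓ ≤ b →
        d ℓ = ((2 * ℓ).choose (ℓ - k) : ℝ) / ((b : ℝ) + ℓ)
          + 2 * (ℓ : ℝ) * ∑ m ∈ Finset.range (ℓ - k),
              (-1 : ℝ) ^ (ℓ - k - m) / ((b : ℝ) + k + m)
                * (Nat.factorial (k + ℓ + m - 1) : ℝ)
                / ((Nat.factorial m : ℝ) * (Nat.factorial (2 * k + m) : ℝ)
                    * (Nat.factorial (ℓ - k - m) : ℝ))) ∧
      (∀ q : ℕ, k ≤ q → q ≤ b →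
        (1 / ((q : ℝ) + b)) * ((2 * q).choose (q - k) : ℝ)
          = ∑ ℓ ∈ Finset.Icc k q, d ℓ * ((2 * q).choose (q - ℓ) : ℝ)) := by
  refine ⟨_, fun ℓ _ _ => rfl, fun q hkq _ => ?_⟩
  rw [sum_congr rfl fun ℓ hℓ => by rw [coeff_eq_sum_chebyshevCoeff (b : ℝ) (mem_Icc.mp hℓ).1],
    sum_Icc_mul_eq_of_triangular hkq (fun ℓ => ((2 * q).choose (q - ℓ) : ℝ))
      (fun j => ((2 * j)! : ℝ)) (fun j => ((b : ℝ) + j)⁻¹ / ((j - k)! * (j + k)!))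
      (chebyshevCoeff ℝ) fun j hj =>
         factorial_mul_choose_add_sum_chebyshevCoeff_mul_choose_eq_zero (mem_Ico.mp hj).2,
    Nat.sub_self, choose_zero_right, cast_choose ℝ (by omega : q - k ≤ 2 * q),
    show 2 * q - (q - k) = q + k by omega]
  ring

/-- Fix integers `b ≥ 1` and `0 ≤ k ≤ b−1`. There exist real numbers
`d_k^{(k)},…,d_b^{(k)}`, given explicitly by
`d_ℓ^{(k)} = C(2ℓ, ℓ−k)/(b+ℓ) + 2ℓ ∑_{m=0}^{ℓ−k−1} (−1)^{ℓ−k−m}/(b+k+m)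
  · (k+ℓ+m−1)!/(m!(2k+m)!(ℓ−k−m)!)`,
such that for every even nonnegative integer `n = 2q` with `k ≤ q ≤ b`:
`(1/(q+b)) C(2q, q−k) = ∑_{ℓ=k}^{q} d_ℓ^{(k)} C(2q, q−ℓ)`. -/
theorem exists_coeffs_binomial_identity (b k : ℕ) (hb : 1 ≤ b) (hk : k ≤ b - 1) :
    ∃ d : ℕ → ℝ,
      (∀ ℓ : ℕ, k ≤ ℓ → ℓ ≤ b →
        d ℓ = ((2 * ℓ).choose (ℓ - k) : ℝ) / ((b : ℝ) + ℓ)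
          + 2 * (ℓ : ℝ) * ∑ m ∈ Finset.range (ℓ - k),
              (-1 : ℝ) ^ (ℓ - k - m) / ((b : ℝ) + k + m)
                * (Nat.factorial (k + ℓ + m - 1) : ℝ)
                / ((Nat.factorial m : ℝ) * (Nat.factorial (2 * k + m) : ℝ)
                    * (Nat.factorial (ℓ - k - m) : ℝ))) ∧
      (∀ q : ℕ, k ≤ q → q ≤ b →
        (1 / ((q : ℝ) + b)) * ((2 * q).choose (q - k) : ℝ)
          = ∑ ℓ ∈ Finset.Icc k q, d ℓ * ((2 * q).choose (q - ℓ) : ℝ)) :=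
  exists_coeffs_binomial_identity_general b k
end

section
/- Let a > c > 0, set r₀ := (a−c)/(a+c). Then (1/2)∫_{-π}^{π} log(a² cos²θ + c² sin²θ) · (c₀ + 2c₁ cos(2θ)) dθ = 2π(c₀ log((a+c)/2) + c₁ (a−c)/(a+c)) for all real constants c₀, c₁. -/
/-!
With `r = (a - c) / (a + c)` one has
`a² cos² θ + c² sin² θ = ((a + c) / 2)² (1 + 2 r cos 2θ + r²)`, and for `|r| < 1` the Taylor series
of `log (1 + z)` at `z = r e^{iφ}` gives the Fourier expansion
`log (1 + 2 r cos φ + r²) = ∑_{n ≥ 1} 2 (-1)^{n+1} rⁿ / n · cos (n φ)`.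
Integrating term by term against `c₀ + 2 c₁ cos φ`, orthogonality of the cosines leaves only the
`n = 1` term, `4 π r c₁`; the constant `log ((a + c) / 2)²` contributes `4 π c₀ log ((a + c) / 2)`.
-/

open Real MeasureTheory intervalIntegral

-- The `n = 0` coefficient is `0` through division by zero.
noncomputable def logSeriesCoeff (r : ℝ) (n : ℕ) : ℝ := 2 * (-1) ^ (n + 1) * r ^ n / n

@[simp] lemma logSeriesCoeff_zero (r : ℝ) : logSeriesCoeff r 0 = 0 := by
  simp [logSeriesCoeff]

@[simp] lemma logSeriesCoeff_one (r : ℝ) : logSeriesCoeff r 1 = 2 * r := by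
  simp [logSeriesCoeff]

lemma abs_logSeriesCoeff_le (r : ℝ) (n : ℕ) : |logSeriesCoeff r n| ≤ 2 * |r| ^ n := by
  rcases Nat.eq_zero_or_pos n with rfl | hn
  · simp
  have hn' : (1 : ℝ) ≤ n := by exact_mod_cast hn
  rw [logSeriesCoeff, abs_div, abs_mul, abs_mul, abs_pow, abs_pow, Nat.abs_cast]
  simp only [abs_neg, abs_one, one_pow, mul_one, abs_two]
  exact div_le_self (by positivity) hn'

lemma one_add_two_mul_cos_add_sq_pos {r : ℝ} (hr : |r| < 1) (θ : ℝ) :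
    0 < 1 + 2 * r * cos θ + r ^ 2 := by
  have hrc : |r * cos θ| ≤ |r| := by
    rw [abs_mul]; exact mul_le_of_le_one_right (abs_nonneg r) (abs_cos_le_one θ)
  nlinarith [neg_abs_le (r * cos θ), sq_abs r, mul_pos (sub_pos.2 hr) (sub_pos.2 hr)]

-- `log (1 + 2 r cos θ + r²) = log ‖1 + z‖² = 2 Re (log (1 + z))` for `z = r e^{iθ}`.
lemma hasSum_log_one_add_two_mul_cos_add_sq {r : ℝ} (hr : |r| < 1) (θ : ℝ) :
    HasSum (fun n : ℕ => logSeriesCoeff r n * cos (n * θ)) (log (1 + 2 * r * cos θ + r ^ 2)) := by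
  set z : ℂ := r * Complex.exp (θ * Complex.I)
  have hz : ‖z‖ < 1 := by simpa [z, Complex.norm_exp_ofReal_mul_I] using hr
  have hnormSq : ‖1 + z‖ ^ 2 = 1 + 2 * r * cos θ + r ^ 2 := by
    rw [← Complex.normSq_eq_norm_sq, Complex.normSq_apply]
    simp only [z, Complex.add_re, Complex.add_im, Complex.one_re, Complex.one_im,
      Complex.re_ofReal_mul, Complex.im_ofReal_mul, Complex.exp_ofReal_mul_I_re,
      Complex.exp_ofReal_mul_I_im]
    linear_combination r ^ 2 * sin_sq_add_cos_sq θ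
  have hterm (n : ℕ) :
      2 * ((-1) ^ (n + 1) * z ^ n / n : ℂ).re = logSeriesCoeff r n * cos (n * θ) := by
    have : (-1) ^ (n + 1) * z ^ n / n
        = ((logSeriesCoeff r n / 2 : ℝ) : ℂ) * Complex.exp ((n * θ : ℝ) * Complex.I) := by
      simp only [z, mul_pow, ← Complex.exp_nat_mul, logSeriesCoeff]
      push_cast; ring_nf
    rw [this, Complex.re_ofReal_mul, Complex.exp_ofReal_mul_I_re]; ring
  have hlog : 2 * (Complex.log (1 + z)).re = log (1 + 2 * r * cos θ + r ^ 2) := by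
    rw [Complex.log_re, ← hnormSq, Real.log_pow]; push_cast; ring
  simpa only [hterm, hlog] using
    (Complex.hasSum_re (Complex.hasSum_taylorSeries_log hz)).mul_left 2

lemma integral_cos_int_mul {k : ℤ} (hk : k ≠ 0) : ∫ θ in (-π)..π, cos (k * θ) = 0 := by
  rw [integral_comp_mul_left cos (Int.cast_ne_zero.mpr hk)]
  simp [integral_cos, sin_int_mul_pi]

lemma integral_cos_nat_mul_mul_cos (n : ℕ) :
    ∫ θ in (-π)..π, cos (n * θ) * cos θ = if n = 1 then π else 0 := by
  have hsum (θ : ℝ) : cos (n * θ) * cos θ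
      = cos (((n - 1 : ℤ) : ℝ) * θ) / 2 + cos (((n + 1 : ℤ) : ℝ) * θ) / 2 := by
    push_cast
    rw [sub_mul, add_mul, one_mul, cos_sub, cos_add]; ring
  simp_rw [hsum]
  rw [intervalIntegral.integral_add (Continuous.intervalIntegrable (by fun_prop) _ _)
      (Continuous.intervalIntegrable (by fun_prop) _ _), intervalIntegral.integral_div,
    intervalIntegral.integral_div,
    integral_cos_int_mul (by omega : (n + 1 : ℤ) ≠ 0)]
  split_ifs with hn
  · subst hn; simp
  · rw [integral_cos_int_mul (by omega : (n - 1 : ℤ) ≠ 0)]; simp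

lemma integral_comp_two_mul_of_periodic {f : ℝ → ℝ} (hf : Continuous f)
    (hper : Function.Periodic f (2 * π)) :
    ∫ θ in (-π)..π, f (2 * θ) = ∫ θ in (-π)..π, f θ := by
  have hint (s t : ℝ) : IntervalIntegrable f volume s t := hf.intervalIntegrable s t
  have hfull : ∫ x in (-(2 * π))..(2 * π), f x = 2 * ∫ x in (-π)..π, f x := by
    have h := hper.intervalIntegral_add_zsmul_eq 2 (-(2 * π)) hint
    rw [hper.intervalIntegral_add_eq (-(2 * π)) (-π)] at h
    rw [show -π + 2 * π = π by ring,
      show -(2 * π) + (2 : ℤ) • (2 * π) = 2 * π by simp; ring] at h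
    simpa using h
  rw [integral_comp_mul_left f two_ne_zero, mul_neg, hfull, smul_eq_mul]; ring

lemma hasSum_integral_log_one_add_two_mul_cos_add_sq_mul {r : ℝ} (hr : |r| < 1) {w : ℝ → ℝ}
    (hw : Continuous w) :
    HasSum (fun n : ℕ => logSeriesCoeff r n * ∫ θ in (-π)..π, cos (n * θ) * w θ)
      (∫ θ in (-π)..π, log (1 + 2 * r * cos θ + r ^ 2) * w θ) := by
  obtain ⟨C, hC⟩ :=
    (isCompact_uIcc (a := -π) (b := π)).exists_bound_of_continuousOn hw.continuousOn
  simp_rw [← intervalIntegral.integral_const_mul, ← mul_assoc]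
  refine hasSum_integral_of_dominated_convergence (fun n _ => 2 * |r| ^ n * C)
    (fun n => (by fun_prop : Continuous _).aestronglyMeasurable) (fun n => ?_)
    (.of_forall fun θ _ =>
      (summable_geometric_of_lt_one (abs_nonneg r) hr).mul_left 2 |>.mul_right C)
    intervalIntegrable_const
    (.of_forall fun θ _ => (hasSum_log_one_add_two_mul_cos_add_sq hr θ).mul_right (w θ))
  refine .of_forall fun θ hθ => ?_
  rw [norm_mul, norm_mul]
  calc _ ≤ 2 * |r| ^ n * 1 * C := by
        gcongr
        exacts [abs_logSeriesCoeff_le r n, abs_cos_le_one _, hC θ (Set.uIoc_subset_uIcc hθ)]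
    _ = 2 * |r| ^ n * C := by ring

lemma integral_log_one_add_two_mul_cos_add_sq_mul {r : ℝ} (hr : |r| < 1) (c₀ c₁ : ℝ) :
    ∫ θ in (-π)..π, log (1 + 2 * r * cos θ + r ^ 2) * (c₀ + 2 * c₁ * cos θ)
      = 4 * π * r * c₁ := by
  have hcoeff (n : ℕ) :
      logSeriesCoeff r n * ∫ θ in (-π)..π, cos (n * θ) * (c₀ + 2 * c₁ * cos θ)
        = if n = 1 then 4 * π * r * c₁ else 0 := by
    rcases eq_or_ne n 0 with rfl | hn
    · simp
    have hsplit : ∫ θ in (-π)..π, cos (n * θ) * (c₀ + 2 * c₁ * cos θ)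
        = c₀ * (∫ θ in (-π)..π, cos (n * θ)) + 2 * c₁ * ∫ θ in (-π)..π, cos (n * θ) * cos θ := by
      rw [← intervalIntegral.integral_const_mul, ← intervalIntegral.integral_const_mul,
        ← intervalIntegral.integral_add (Continuous.intervalIntegrable (by fun_prop) _ _)
          (Continuous.intervalIntegrable (by fun_prop) _ _)]
      congr 1 with θ; ring
    rw [hsplit, integral_cos_nat_mul_mul_cos, ← Int.cast_natCast,
      integral_cos_int_mul (Int.natCast_ne_zero.mpr hn)]
    split_ifs with h1
    · subst h1; simp; ring
    · simp
  exact (hasSum_integral_log_one_add_two_mul_cos_add_sq_mul hr (by fun_prop)).unique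
    ((hasSum_ite_eq 1 _).congr_fun hcoeff)

-- `a cos θ + i c sin θ = ((a + c) e^{iθ} + (a - c) e^{-iθ}) / 2`, whose squared modulus is this.
lemma sq_mul_cos_sq_add_sq_mul_sin_sq {a c : ℝ} (h : a + c ≠ 0) (θ : ℝ) :
    a ^ 2 * cos θ ^ 2 + c ^ 2 * sin θ ^ 2
      = ((a + c) / 2) ^ 2 *
          (1 + 2 * ((a - c) / (a + c)) * cos (2 * θ) + ((a - c) / (a + c)) ^ 2) := by
  rw [cos_two_mul]
  field_simp
  linear_combination 4 * c ^ 2 * sin_sq_add_cos_sq θ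

/-- Let `a > c > 0`. Then for all real constants `c₀, c₁`:
`(1/2)∫_{-π}^{π} log(a² cos²θ + c² sin²θ)(c₀ + 2c₁ cos 2θ) dθ
  = 2π (c₀ log((a+c)/2) + c₁ (a−c)/(a+c))`. -/
theorem integral_log_ellipse_density (a c : ℝ) (hc : 0 < c) (hca : c < a) (c₀ c₁ : ℝ) :
    (1 / 2) * ∫ θ in (-Real.pi)..Real.pi,
        Real.log (a ^ 2 * Real.cos θ ^ 2 + c ^ 2 * Real.sin θ ^ 2) *
          (c₀ + 2 * c₁ * Real.cos (2 * θ))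
      = 2 * Real.pi * (c₀ * Real.log ((a + c) / 2) + c₁ * (a - c) / (a + c)) := by
  have hac : 0 < a + c := by linarith
  set r := (a - c) / (a + c)
  have hr : |r| < 1 := by
    rw [abs_lt, lt_div_iff₀ hac, div_lt_one hac]; constructor <;> linarith
  set L := log ((a + c) / 2)
  set f : ℝ → ℝ := fun φ => (2 * L + log (1 + 2 * r * cos φ + r ^ 2)) * (c₀ + 2 * c₁ * cos φ)
  have hf (θ : ℝ) : log (a ^ 2 * cos θ ^ 2 + c ^ 2 * sin θ ^ 2) * (c₀ + 2 * c₁ * cos (2 * θ))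
      = f (2 * θ) := by
    rw [sq_mul_cos_sq_add_sq_mul_sin_sq hac.ne', log_mul (by positivity)
      (one_add_two_mul_cos_add_sq_pos hr _).ne', log_pow]
    push_cast; ring
  have hlog_cont : Continuous fun φ => log (1 + 2 * r * cos φ + r ^ 2) :=
    (by fun_prop : Continuous _).log fun φ => (one_add_two_mul_cos_add_sq_pos hr φ).ne'
  have hf_per : Function.Periodic f (2 * π) := fun φ => by simp only [f, cos_add_two_pi]
  have hweight : ∫ θ in (-π)..π, (c₀ + 2 * c₁ * cos θ) = 2 * π * c₀ := by
    simp [two_mul]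
  simp_rw [hf]
  rw [integral_comp_two_mul_of_periodic (by fun_prop) hf_per]
  simp only [f, add_mul]
  rw [intervalIntegral.integral_add (Continuous.intervalIntegrable (by fun_prop) _ _)
    (Continuous.intervalIntegrable (by fun_prop) _ _), intervalIntegral.integral_const_mul,
    hweight, integral_log_one_add_two_mul_cos_add_sq_mul hr]
  simp only [r]
  field_simp
  ring
end

section
/- Let 0 < c ≤ a with constants a, c real, and let U be the ellipse {z ∈ ℂ : (Re z/a)² + (Im z/c)² < 1}. For every natural number n, ∫_U z^n d²z/π = 0 if n is odd, and if n is even it equals 2 α^{n/2} γ^{n/2} · (α²−γ²)/(n+2) · C(n, n/2), where α = (a+c)/2, γ = (a−c)/2, and C(n, n/2) is a binomial coefficient. -/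
/-! The ellipse is the image of the unit disc under the real-linear map `z ↦ a Re z + i c Im z`,
whose determinant is `ac = α² - γ²`. In polar coordinates the radial integral contributes
`1/(n+2)`, and on the unit circle the map reads `e^{iθ} ↦ α e^{iθ} + γ e^{-iθ}`. Expanding its
`n`-th power binomially, only the constant term `C(n, n/2) (αγ)^{n/2}` survives integration over a
period. -/

open MeasureTheory Set Complex
open scoped Real

theorem setIntegral_image_continuousLinearMap {E F : Type*} [NormedAddCommGroup E]
    [NormedSpace ℝ E] [FiniteDimensional ℝ E] [MeasurableSpace E] [BorelSpace E]
    [NormedAddCommGroup F] [NormedSpace ℝ F] (μ : Measure E) [μ.IsAddHaarMeasure]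
    (L : E →L[ℝ] E) (hL : Function.Injective L) {s : Set E} (hs : MeasurableSet s) (g : E → F) :
    ∫ x in L '' s, g x ∂μ = |L.det| • ∫ x in s, g (L x) ∂μ := by
  rw [integral_image_eq_integral_abs_det_fderiv_smul μ hs
    (fun x _ ↦ L.hasFDerivAt.hasFDerivWithinAt) hL.injOn, integral_smul]

theorem polarCoord_target_inter_preimage_ball (R : ℝ) :
    polarCoord.target ∩ Complex.polarCoord.symm ⁻¹' Metric.ball 0 R = Ioo 0 R ×ˢ Ioo (-π) π := by
  ext ⟨r, θ⟩
  simp only [polarCoord_target, mem_inter_iff, mem_prod, mem_Ioi, mem_Ioo, mem_preimage,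
    Metric.mem_ball, dist_zero_right, Complex.norm_polarCoord_symm]
  constructor
  · rintro ⟨⟨hr, hθ⟩, hrR⟩
    exact ⟨⟨hr, (abs_lt.mp hrR).2⟩, hθ⟩
  · rintro ⟨⟨hr, hrR⟩, hθ⟩
    exact ⟨⟨hr, hθ⟩, abs_lt.mpr ⟨by linarith, hrR⟩⟩

theorem integral_polarCoord_symm_eq_setIntegral_ball {E : Type*} [NormedAddCommGroup E]
    [NormedSpace ℝ E] (R : ℝ) (f : ℂ → E) :
    ∫ p in Ioo 0 R ×ˢ Ioo (-π) π, p.1 • f (Complex.polarCoord.symm p)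
      = ∫ z in Metric.ball (0 : ℂ) R, f z := by
  have hmeas : MeasurableSet (Complex.polarCoord.symm ⁻¹' Metric.ball 0 R) :=
    measurableSet_ball.preimage
      (measurableEquivRealProd.symm.measurable.comp continuous_polarCoord_symm.measurable)
  rw [← integral_indicator measurableSet_ball, ← Complex.integral_comp_polarCoord_symm,
    ← polarCoord_target_inter_preimage_ball, ← setIntegral_indicator hmeas]
  refine integral_congr_ae (ae_of_all _ fun p ↦ ?_)
  rw [indicator_smul_apply]
  exact congrArg (p.1 • · : E → E) (indicator_comp_right _)

theorem polarCoord_symm_eq_smul_exp (p : ℝ × ℝ) :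
    Complex.polarCoord.symm p = p.1 • exp (p.2 * I) := by
  rw [Complex.polarCoord_symm_apply, exp_mul_I, real_smul, ofReal_cos, ofReal_sin]

theorem setIntegral_ball_pow_continuousLinearMap (T : ℂ →L[ℝ] ℂ) (n : ℕ) :
    ∫ z in Metric.ball (0 : ℂ) 1, T z ^ n
      = ((n : ℝ) + 2)⁻¹ • ∫ θ in -π..π, T (exp (θ * I)) ^ n := by
  have hhom (p : ℝ × ℝ) :
      p.1 • T (Complex.polarCoord.symm p) ^ n = p.1 ^ (n + 1) • T (exp (p.2 * I)) ^ n := by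
    rw [polarCoord_symm_eq_smul_exp, T.map_smul, smul_pow, smul_smul, pow_succ']
  have hradial : ∫ r in Ioo (0 : ℝ) 1, r ^ (n + 1) = ((n : ℝ) + 2)⁻¹ := by
    rw [← integral_Ioc_eq_integral_Ioo, ← intervalIntegral.integral_of_le zero_le_one,
      integral_pow]
    push_cast
    ring
  rw [← integral_polarCoord_symm_eq_setIntegral_ball, Measure.volume_eq_prod,
    ← Measure.prod_restrict]
  simp_rw [hhom]
  rw [integral_prod_smul (fun r : ℝ ↦ r ^ (n + 1)) (fun θ : ℝ ↦ T (exp (θ * I)) ^ n), hradial,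
    intervalIntegral.integral_of_le (by linarith [Real.pi_pos]), integral_Ioc_eq_integral_Ioo]

theorem integral_exp_int_mul_mul_I (m : ℤ) :
    ∫ θ in -π..π, exp (m * (θ * I)) = if m = 0 then (2 * π : ℂ) else 0 := by
  split_ifs with hm
  · simp [hm]
    ring
  have hmI : (m : ℂ) * I ≠ 0 := by simp [hm]
  have hperiod : (m : ℂ) * I * π = m * I * (-π : ℝ) + m * (2 * π * I) := by
    push_cast
    ring
  simp_rw [← mul_assoc, mul_comm _ I, ← mul_assoc, mul_comm I]
  rw [integral_exp_mul_complex hmI, hperiod, exp_add, exp_int_mul_two_pi_mul_I, mul_one, sub_self,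
    zero_div]

open Finset in
theorem Finset.Nat.antidiagonal_filter_fst_eq_snd (n : ℕ) :
    {x ∈ antidiagonal n | x.1 = x.2} = if Even n then {(n / 2, n / 2)} else ∅ := by
  ext ⟨i, j⟩
  split_ifs with hn <;> rw [Nat.even_iff] at hn
  · simp only [mem_filter, HasAntidiagonal.mem_antidiagonal, mem_singleton, Prod.mk.injEq]
    omega
  · simp only [mem_filter, HasAntidiagonal.mem_antidiagonal, notMem_empty, iff_false, not_and]
    omega

open Finset in
theorem integral_mul_exp_add_mul_exp_neg_pow (p q : ℂ) (n : ℕ) :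
    ∫ θ in -π..π, (p * exp (θ * I) + q * exp (-(θ * I))) ^ n
      = if Even n then 2 * π * n.choose (n / 2) * p ^ (n / 2) * q ^ (n / 2) else 0 := by
  have hexpand (θ : ℝ) : (p * exp (θ * I) + q * exp (-(θ * I))) ^ n
      = ∑ k ∈ antidiagonal n, (n.choose k.1 * p ^ k.1 * q ^ k.2)
          * exp (((k.1 : ℤ) - k.2 : ℤ) * (θ * I)) := by
    rw [(Commute.all _ _).add_pow']
    refine sum_congr rfl fun k _ ↦ ?_
    simp only [nsmul_eq_mul, Int.cast_sub, Int.cast_natCast, sub_mul, exp_sub, exp_nat_mul,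
      exp_neg]
    ring
  simp_rw [hexpand]
  rw [intervalIntegral.integral_finsetSum
    fun k _ ↦ (by fun_prop : Continuous _).intervalIntegrable _ _]
  simp_rw [intervalIntegral.integral_const_mul, integral_exp_int_mul_mul_I, sub_eq_zero,
    Nat.cast_inj, mul_ite, mul_zero]
  rw [sum_ite, sum_const_zero, add_zero, Finset.Nat.antidiagonal_filter_fst_eq_snd]
  split_ifs
  · rw [sum_singleton]
    ring
  · rfl

noncomputable def ellipseMap (a c : ℝ) : ℂ →L[ℝ] ℂ :=
  (a : ℂ) • (ofRealCLM.comp reCLM) + ((c : ℂ) * I) • (ofRealCLM.comp imCLM)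

@[simp]
theorem ellipseMap_apply (a c : ℝ) (z : ℂ) : ellipseMap a c z = ⟨a * z.re, c * z.im⟩ := by
  apply Complex.ext <;> simp [ellipseMap]

theorem det_ellipseMap (a c : ℝ) : (ellipseMap a c).det = a * c := by
  have hmatrix : LinearMap.toMatrix basisOneI basisOneI (ellipseMap a c : ℂ →ₗ[ℝ] ℂ)
      = !![a, 0; 0, c] := by
    ext i j
    fin_cases i <;> fin_cases j <;> simp [LinearMap.toMatrix_apply]
  rw [ContinuousLinearMap.det, ← LinearMap.det_toMatrix basisOneI, hmatrix, Matrix.det_fin_two_of,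
    mul_zero, sub_zero]

theorem ellipseMap_comp_ellipseMap_inv {a c : ℝ} (ha : a ≠ 0) (hc : c ≠ 0) (z : ℂ) :
    ellipseMap a c (ellipseMap a⁻¹ c⁻¹ z) = z := by
  apply Complex.ext <;> simp [ha, hc]

theorem ellipseMap_inv_comp_ellipseMap {a c : ℝ} (ha : a ≠ 0) (hc : c ≠ 0) (z : ℂ) :
    ellipseMap a⁻¹ c⁻¹ (ellipseMap a c z) = z := by
  apply Complex.ext <;> simp [ha, hc]

theorem image_ellipseMap_ball {a c : ℝ} (ha : a ≠ 0) (hc : c ≠ 0) :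
    ellipseMap a c '' Metric.ball 0 1 = {z : ℂ | (z.re / a) ^ 2 + (z.im / c) ^ 2 < 1} := by
  rw [image_eq_preimage_of_inverse (ellipseMap_inv_comp_ellipseMap ha hc)
    (ellipseMap_comp_ellipseMap_inv ha hc)]
  ext z
  simp only [mem_preimage, mem_ball_zero_iff, mem_ofPred_eq, ← sq_lt_one_iff₀ (norm_nonneg _),
    Complex.sq_norm, normSq_mk, ellipseMap_apply]
  ring_nf

theorem ellipseMap_exp_mul_I (a c θ : ℝ) :
    ellipseMap a c (exp (θ * I))
      = ((a + c) / 2 : ℝ) * exp (θ * I) + ((a - c) / 2 : ℝ) * exp (-(θ * I)) := by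
  rw [← neg_mul, ← ofReal_neg, exp_mul_I, exp_mul_I, ← ofReal_cos, ← ofReal_sin, ← ofReal_cos,
    ← ofReal_sin, Real.cos_neg, Real.sin_neg]
  apply Complex.ext <;> simp <;> ring

/-- Let `0 < c ≤ a` and let `U` be the ellipse `{z : (Re z/a)² + (Im z/c)² < 1}`.
For every `n ∈ ℕ`, `∫_U zⁿ d²z/π = 0` if `n` is odd, and if `n` is even it equals
`2 α^{n/2} γ^{n/2} (α²−γ²)/(n+2) · C(n, n/2)`, where `α = (a+c)/2`, `γ = (a−c)/2`. -/
theorem integral_pow_over_ellipse (a c : ℝ) (hc : 0 < c) (hca : c ≤ a) (n : ℕ) :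
    let α : ℝ := (a + c) / 2
    let γ : ℝ := (a - c) / 2
    let U : Set ℂ := {z : ℂ | (z.re / a) ^ 2 + (z.im / c) ^ 2 < 1}
    (Odd n → (∫ z in U, z ^ n) / (Real.pi : ℂ) = 0) ∧
    (Even n →
      (∫ z in U, z ^ n) / (Real.pi : ℂ)
        = ((2 * α ^ (n / 2) * γ ^ (n / 2) * (α ^ 2 - γ ^ 2) / ((n : ℝ) + 2)
            * (n.choose (n / 2) : ℝ) : ℝ) : ℂ)) := by
  intro α γ U
  have ha : 0 < a := hc.trans_le hca
  have hU : U = ellipseMap a c '' Metric.ball 0 1 := (image_ellipseMap_ball ha.ne' hc.ne').symm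
  have hinj : Function.Injective (ellipseMap a c) :=
    Function.LeftInverse.injective (ellipseMap_inv_comp_ellipseMap ha.ne' hc.ne')
  rw [hU, setIntegral_image_continuousLinearMap volume _ hinj measurableSet_ball, det_ellipseMap,
    abs_of_pos (mul_pos ha hc), setIntegral_ball_pow_continuousLinearMap]
  simp_rw [ellipseMap_exp_mul_I]
  rw [integral_mul_exp_add_mul_exp_neg_pow]
  refine ⟨fun hn ↦ ?_, fun hn ↦ ?_⟩
  · rw [if_neg (Nat.not_even_iff_odd.2 hn)]
    simp
  · rw [if_pos hn, real_smul, real_smul]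
    simp only [α, γ]
    push_cast
    field_simp
    ring
end

section
/- Let a > c > 0 and let ν be the measure on the ellipse ∂U = {a cosθ + i c sinθ : θ ∈ (−π,π]} given by dν = (c₀ + 2c₁ cos(2θ)) dθ for real constants c₀, c₁. Then for n ∈ ℕ, ∫_{∂U} z^{−n} dν(z) equals 2π c₀ if n = 0, equals 8π c₁/(a+c)² if n = 2, and equals 0 otherwise. -/
/-!
Put `w = e^{iθ}`. The ellipse point factors as `z = ((a + c) / 2) w (1 - q w⁻²)` with
`q = (c - a) / (a + c)`, and `|q| < 1` since `a, c > 0`. The negative binomial series of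
`(1 - q w⁻²)⁻ⁿ` turns `z⁻ⁿ` into an absolutely convergent trigonometric series with
frequencies `-n - 2j` (`j ≥ 0`) and leading coefficient `(2 / (a + c))ⁿ`. Integrating it
termwise against `c₀ + c₁ (w² + w⁻²)` keeps only the terms whose frequency cancels that of the
weight.
-/

open Complex Real MeasureTheory

theorem integral_exp_int_mul_I (m : ℤ) :
    ∫ θ in -π..π, exp (m * I * θ) = if m = 0 then (2 * π : ℂ) else 0 := by
  split_ifs with hm
  · simp [hm]
    ring
  · have hmI : (m : ℂ) * I ≠ 0 := by simp [hm, I_ne_zero]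
    have hper : exp (m * I * π) = exp (m * I * (-π : ℝ)) := by
      rw [show (m : ℂ) * I * π = m * I * (-π : ℝ) + m * (2 * π * I) by push_cast; ring,
        Complex.exp_add, exp_int_mul_two_pi_mul_I, mul_one]
    rw [integral_exp_mul_complex hmI, hper, sub_self, zero_div]

theorem hasSum_integral_of_hasSum_exp_int_mul_I {ι : Type*} [Countable ι] {C : ι → ℂ}
    {u : ι → ℤ} {g : ℝ → ℂ} (hg : ∀ θ : ℝ, HasSum (fun j ↦ C j * exp (u j * I * θ)) (g θ)) :
    HasSum (fun j ↦ if u j = 0 then 2 * π * C j else 0) (∫ θ in -π..π, g θ) := by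
  have hnorm (j : ι) (θ : ℝ) : ‖C j * exp (u j * I * θ)‖ = ‖C j‖ := by
    rw [norm_mul, show (u j : ℂ) * I * θ = ((u j * θ : ℝ) : ℂ) * I by push_cast; ring,
      norm_exp_ofReal_mul_I, mul_one]
  -- in finite dimension, summability at `θ = 0` already gives absolute summability
  have hC : Summable fun j ↦ ‖C j‖ :=
    summable_norm_iff.mpr (by simpa using (hg 0).summable)
  have hsum := intervalIntegral.hasSum_integral_of_dominated_convergence (a := -π) (b := π)
    (μ := volume) (fun j _ ↦ ‖C j‖)
    (fun j ↦ (by fun_prop : Continuous fun θ : ℝ ↦ C j * exp (u j * I * θ)).aestronglyMeasurable)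
    (fun j ↦ .of_forall fun θ _ ↦ (hnorm j θ).le) (.of_forall fun _ _ ↦ hC)
    intervalIntegrable_const (.of_forall fun θ _ ↦ hg θ)
  have hterm (j : ι) :
      ∫ θ in -π..π, C j * exp (u j * I * θ) = if u j = 0 then 2 * π * C j else 0 := by
    rw [intervalIntegral.integral_const_mul, integral_exp_int_mul_I]
    split_ifs <;> ring
  simpa only [hterm] using hsum

theorem integral_mul_add_two_mul_cos_two_mul {f : ℝ → ℂ} {α β : ℝ}
    (hf : IntervalIntegrable f volume α β) (c₀ c₁ : ℝ) :
    ∫ θ in α..β, f θ * ((c₀ : ℂ) + 2 * (c₁ : ℂ) * (Real.cos (2 * θ) : ℂ)) =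
      c₀ * (∫ θ in α..β, f θ) + c₁ * (∫ θ in α..β, f θ * exp (2 * I * θ)) +
        c₁ * ∫ θ in α..β, f θ * exp (-2 * I * θ) := by
  have hexp (k : ℂ) : IntervalIntegrable (fun θ : ℝ ↦ f θ * exp (k * I * θ)) volume α β :=
    hf.mul_continuousOn (by fun_prop)
  have hcos (θ : ℝ) : f θ * ((c₀ : ℂ) + 2 * (c₁ : ℂ) * (Real.cos (2 * θ) : ℂ)) =
      c₀ * f θ + c₁ * (f θ * exp (2 * I * θ)) + c₁ * (f θ * exp (-2 * I * θ)) := by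
    rw [mul_comm 2 (c₁ : ℂ), mul_assoc (c₁ : ℂ), ofReal_cos, two_cos]
    push_cast
    ring_nf
  simp_rw [hcos]
  have h₀ := hf.const_mul (c₀ : ℂ)
  have h₂ := (hexp 2).const_mul (c₁ : ℂ)
  rw [intervalIntegral.integral_add (h₀.add h₂) ((hexp (-2)).const_mul _),
    intervalIntegral.integral_add h₀ h₂, intervalIntegral.integral_const_mul,
    intervalIntegral.integral_const_mul, intervalIntegral.integral_const_mul]

theorem hasSum_multichoose_mul_geometric {𝕜 : Type*} [NormedDivisionRing 𝕜]
    [HasSummableGeomSeries 𝕜] (n : ℕ) {x : 𝕜} (hx : ‖x‖ < 1) :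
    HasSum (fun j ↦ (n.multichoose j : 𝕜) * x ^ j) ((1 - x)⁻¹ ^ n) := by
  rcases n with _ | k
  · rw [pow_zero]
    refine (hasSum_ite_eq 0 1).congr_fun fun j ↦ ?_
    cases j <;> simp
  · rw [inv_pow, ← one_div]
    refine (hasSum_choose_mul_geometric_of_norm_lt_one k hx).congr_fun fun j ↦ ?_
    rw [Nat.multichoose_eq, show k + 1 + j - 1 = j + k by omega, Nat.choose_symm_add]

noncomputable def ellipse (a c θ : ℝ) : ℂ := a * Real.cos θ + I * c * Real.sin θ

section Ellipse

variable {a c : ℝ}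

theorem ellipse_ne_zero (ha : a ≠ 0) (hc : c ≠ 0) (θ : ℝ) : ellipse a c θ ≠ 0 := by
  intro h
  have hcos : a * Real.cos θ = 0 := by simpa [ellipse, -ofReal_cos] using congrArg re h
  have hsin : c * Real.sin θ = 0 := by simpa [ellipse, -ofReal_sin] using congrArg im h
  simpa [(mul_eq_zero.mp hcos).resolve_left ha, (mul_eq_zero.mp hsin).resolve_left hc] using
    Real.sin_sq_add_cos_sq θ

theorem ellipse_eq_mul_exp_mul_one_sub (hac : a + c ≠ 0) (θ : ℝ) :
    ellipse a c θ =
      (a + c) / 2 * exp (I * θ) * (1 - (c - a) / (a + c) * (exp (I * θ) ^ 2)⁻¹) := by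
  have hac' : (a : ℂ) + c ≠ 0 := mod_cast hac
  have hw := exp_ne_zero (I * θ)
  rw [ellipse, ofReal_cos, ofReal_sin, Complex.cos, Complex.sin, neg_mul, Complex.exp_neg,
    mul_comm (θ : ℂ) I]
  field_simp
  ring_nf
  rw [I_sq]
  ring

theorem norm_sub_div_add_lt_one (ha : 0 < a) (hc : 0 < c) :
    ‖((c : ℂ) - a) / (a + c)‖ < 1 := by
  rw [show ((c : ℂ) - a) / (a + c) = ((c - a) / (a + c) : ℝ) by push_cast; ring, norm_real,
    Real.norm_eq_abs, abs_div, abs_of_pos (by positivity : 0 < a + c),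
    div_lt_one (by positivity), abs_sub_lt_iff]
  constructor <;> linarith

theorem hasSum_ellipse_zpow_neg_mul_exp (ha : 0 < a) (hc : 0 < c) (n : ℕ) (m : ℤ) (θ : ℝ) :
    HasSum (fun j : ℕ ↦ (2 / (a + c)) ^ n * n.multichoose j * ((c - a) / (a + c)) ^ j *
        exp ((m - n - 2 * j : ℤ) * I * θ))
      (ellipse a c θ ^ (-(n : ℤ)) * exp (m * I * θ)) := by
  set w := exp (I * θ) with hw_def
  have hw : w ≠ 0 := exp_ne_zero _
  have hexp (k : ℤ) : exp (k * I * θ) = w ^ k := by rw [mul_assoc, exp_int_mul]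
  have hx : ‖((c : ℂ) - a) / (a + c) * (w ^ 2)⁻¹‖ < 1 := by
    rw [norm_mul, norm_inv, norm_pow, hw_def, norm_exp_I_mul_ofReal, one_pow, inv_one, mul_one]
    exact norm_sub_div_add_lt_one ha hc
  have hfactor : ellipse a c θ ^ (-(n : ℤ)) * exp (m * I * θ) =
      (2 / (a + c)) ^ n * w ^ (m - n) * (1 - (c - a) / (a + c) * (w ^ 2)⁻¹)⁻¹ ^ n := by
    rw [ellipse_eq_mul_exp_mul_one_sub (by positivity), ← hw_def, hexp, zpow_neg, zpow_natCast,
      zpow_sub₀ hw, zpow_natCast, mul_pow, mul_pow, mul_inv, mul_inv, inv_pow (1 - _),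
      ← inv_pow (_ / 2), inv_div]
    ring
  rw [hfactor]
  refine ((hasSum_multichoose_mul_geometric n hx).mul_left _).congr_fun fun j ↦ ?_
  have hpow : w ^ (m - n - 2 * j : ℤ) = w ^ (m - n) * ((w ^ 2)⁻¹) ^ j := by
    rw [← zpow_natCast, ← zpow_natCast, inv_zpow', ← zpow_mul, ← zpow_add₀ hw]
    push_cast
    ring_nf
  rw [hexp, hpow, mul_pow]
  ring

theorem hasSum_integral_ellipse_zpow_neg_mul_exp (ha : 0 < a) (hc : 0 < c) (n : ℕ) (m : ℤ) :
    HasSum (fun j : ℕ ↦ if m - n - 2 * j = 0 then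
        2 * (π : ℂ) * ((2 / (a + c)) ^ n * n.multichoose j * ((c - a) / (a + c)) ^ j) else 0)
      (∫ θ in -π..π, ellipse a c θ ^ (-(n : ℤ)) * exp (m * I * θ)) :=
  hasSum_integral_of_hasSum_exp_int_mul_I (hasSum_ellipse_zpow_neg_mul_exp ha hc n m)

theorem integral_ellipse_zpow_neg (ha : 0 < a) (hc : 0 < c) (n : ℕ) :
    ∫ θ in -π..π, ellipse a c θ ^ (-(n : ℤ)) = if n = 0 then (2 * π : ℂ) else 0 := by
  have h := hasSum_integral_ellipse_zpow_neg_mul_exp ha hc n 0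
  simp only [Int.cast_zero, zero_mul, Complex.exp_zero, mul_one] at h
  rw [h.unique (hasSum_single 0 fun j hj ↦ if_neg (by omega))]
  rcases eq_or_ne n 0 with rfl | hn
  · simp
  · rw [if_neg hn, if_neg (by omega)]

theorem integral_ellipse_zpow_neg_mul_exp_two_mul_I (ha : 0 < a) (hc : 0 < c) (n : ℕ) :
    ∫ θ in -π..π, ellipse a c θ ^ (-(n : ℤ)) * exp (2 * I * θ) =
      if n = 2 then 8 * π / ((a : ℂ) + c) ^ 2 else 0 := by
  have h := hasSum_integral_ellipse_zpow_neg_mul_exp ha hc n 2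
  simp only [Int.cast_ofNat] at h
  rw [h.unique (hasSum_single 0 fun j hj ↦ ?_)]
  · rcases eq_or_ne n 2 with rfl | hn
    · simp only [Nat.cast_ofNat, sub_self, CharP.cast_eq_zero, mul_zero, ↓reduceIte, div_pow,
        Nat.multichoose_zero_right, Nat.cast_one, mul_one]
      ring
    · rw [if_neg hn, if_neg (by omega)]
  · -- the frequency also vanishes for `n = 0, j = 1`, but there `multichoose 0 1 = 0`
    split_ifs with hfreq
    · obtain ⟨rfl, rfl⟩ : n = 0 ∧ j = 1 := by omega
      simp
    · rfl

theorem integral_ellipse_zpow_neg_mul_exp_neg_two_mul_I (ha : 0 < a) (hc : 0 < c) (n : ℕ) :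
    ∫ θ in -π..π, ellipse a c θ ^ (-(n : ℤ)) * exp (-2 * I * θ) = 0 := by
  have h := hasSum_integral_ellipse_zpow_neg_mul_exp ha hc n (-2)
  have hfreq (j : ℕ) : (-2 : ℤ) - n - 2 * j ≠ 0 := by omega
  simp only [hfreq, if_false, Int.cast_neg, Int.cast_ofNat] at h
  exact h.unique hasSum_zero

end Ellipse

/-- Let `a > c > 0` and let `ν` be the measure on the ellipse
`∂U = {a cosθ + i c sinθ}` given by `dν = (c₀ + 2c₁ cos 2θ)dθ`. Then for `n ∈ ℕ`,
`∫_{∂U} z^{−n} dν` equals `2π c₀` if `n = 0`, `8π c₁/(a+c)²` if `n = 2`, and `0` otherwise. -/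
theorem inverse_moments_of_ellipse_measure
    (a c : ℝ) (hc : 0 < c) (hca : c < a) (c₀ c₁ : ℝ) (n : ℕ) :
    ∫ θ in (-Real.pi)..Real.pi,
        ((a : ℂ) * (Real.cos θ : ℂ) + Complex.I * (c : ℂ) * (Real.sin θ : ℂ)) ^ (-(n : ℤ)) *
          ((c₀ : ℂ) + 2 * (c₁ : ℂ) * (Real.cos (2 * θ) : ℂ))
      = if n = 0 then ((2 * Real.pi * c₀ : ℝ) : ℂ)
        else if n = 2 then ((8 * Real.pi * c₁ : ℝ) : ℂ) / (((a + c) ^ 2 : ℝ) : ℂ)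
        else 0 := by
  have ha : 0 < a := hc.trans hca
  have hcont : Continuous fun θ ↦ ellipse a c θ ^ (-(n : ℤ)) :=
    (by unfold ellipse; fun_prop : Continuous (ellipse a c)).zpow₀ _
      fun θ ↦ .inl (ellipse_ne_zero ha.ne' hc.ne' θ)
  change ∫ θ in -π..π, ellipse a c θ ^ (-(n : ℤ)) * _ = _
  rw [integral_mul_add_two_mul_cos_two_mul (hcont.intervalIntegrable _ _),
    integral_ellipse_zpow_neg ha hc, integral_ellipse_zpow_neg_mul_exp_two_mul_I ha hc,
    integral_ellipse_zpow_neg_mul_exp_neg_two_mul_I ha hc]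
  obtain rfl | rfl | ⟨h0, h2⟩ : n = 0 ∨ n = 2 ∨ n ≠ 0 ∧ n ≠ 2 := by omega
  · simp only [↓reduceIte, OfNat.zero_ne_ofNat, mul_zero, add_zero, ofReal_mul, ofReal_ofNat]
    ring
  · simp only [OfNat.ofNat_ne_zero, ↓reduceIte, mul_zero, zero_add, add_zero, ofReal_mul,
      ofReal_ofNat, ofReal_pow, ofReal_add]
    ring
  · simp [h0, h2]
end

section
/- For every real β > 0 and τ ∈ [0,1): ∫_{-π}^{π} (1 − τ cos(2θ)) · R(θ)⁴ dθ = ac·π·(a²(1−τ) + c²(1+τ)), where a > c > 0 are given, τ_{a,c} := (a²−c²)/(a²+c²), and R(θ) := √((a²+c²)/2) · √(1−τ_{a,c}²)/√(1−τ_{a,c} cos(2θ)). -/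
/-!
Since `R(θ)⁴ = ((a² + c²)/2)² (1 - t²)² / (1 - t cos 2θ)²` with `t = τ_{a,c}`, the substitution
`φ = 2θ` leaves `∫ (1 - τ cos φ) / (1 - t cos φ)²` over `[-2π, 2π]`. The integrand is
`A / (1 - t cos φ) + B (cos φ - t) / (1 - t cos φ)²`, where the second summand is the derivative
of `sin φ / (1 - t cos φ)`. Writing `t = 2m / (1 + m²)`, the first is a multiple of the Poisson
kernel `(1 - m²) / (1 + m² - 2m cos φ)`, which has the continuous primitive
`φ + 2 arctan (m sin φ / (1 - m cos φ))`. Finally `√(1 - t²) = 2ac / (a² + c²)`.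
-/

open Real

section

variable {t : ℝ}

lemma one_sub_sq_pos_of_abs_lt_one (ht : |t| < 1) : 0 < 1 - t ^ 2 :=
  sub_pos.mpr ((sq_lt_one_iff_abs_lt_one t).mpr ht)

lemma one_sub_mul_cos_pos (ht : |t| < 1) (φ : ℝ) : 0 < 1 - t * cos φ := by
  have : |t * cos φ| < 1 := by
    rw [abs_mul]
    exact (mul_le_of_le_one_right (abs_nonneg t) (abs_cos_le_one φ)).trans_lt ht
  linarith [le_abs_self (t * cos φ)]

lemma one_add_sq_sub_two_mul_cos_pos (ht : |t| < 1) (φ : ℝ) :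
    0 < 1 + t ^ 2 - 2 * t * cos φ := by
  have hsq : 1 + t ^ 2 - 2 * t * cos φ = (1 - t * cos φ) ^ 2 + (t * sin φ) ^ 2 := by
    linear_combination (-t ^ 2) * sin_sq_add_cos_sq φ
  rw [hsq]
  have := one_sub_mul_cos_pos ht φ
  positivity

lemma hasDerivAt_add_two_mul_arctan (ht : |t| < 1) (φ : ℝ) :
    HasDerivAt (fun φ => φ + 2 * arctan (t * sin φ / (1 - t * cos φ)))
      ((1 - t ^ 2) / (1 + t ^ 2 - 2 * t * cos φ)) φ := by
  have hD := (one_sub_mul_cos_pos ht φ).ne'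
  have hQ := (one_add_sq_sub_two_mul_cos_pos ht φ).ne'
  have hu := ((hasDerivAt_sin φ).const_mul t).fun_div
    ((hasDerivAt_cos φ).const_mul t |>.const_sub 1) hD
  refine ((hasDerivAt_id' (x := φ)).fun_add (hu.arctan.const_mul 2)).congr_deriv ?_
  field_simp
  linear_combination (-2 * t ^ 2 * (1 - t * cos φ)) * sin_sq_add_cos_sq φ

lemma integral_one_sub_sq_div_one_add_sq_sub_two_mul_cos (ht : |t| < 1) {a b : ℝ}
    (ha : sin a = 0) (hb : sin b = 0) :
    ∫ φ in a..b, (1 - t ^ 2) / (1 + t ^ 2 - 2 * t * cos φ) = b - a := by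
  have hcont : Continuous fun φ => (1 - t ^ 2) / (1 + t ^ 2 - 2 * t * cos φ) :=
    continuous_const.div (by fun_prop) fun φ => (one_add_sq_sub_two_mul_cos_pos ht φ).ne'
  rw [intervalIntegral.integral_eq_sub_of_hasDerivAt
    (fun φ _ => hasDerivAt_add_two_mul_arctan ht φ) (hcont.intervalIntegrable a b)]
  simp [ha, hb]

-- `m = tan (α / 2)` for `t = sin α`.
lemma exists_tan_half_angle (ht : |t| < 1) :
    ∃ m : ℝ, |m| < 1 ∧ t * (1 + m ^ 2) = 2 * m ∧ √(1 - t ^ 2) * (1 + m ^ 2) = 1 - m ^ 2 := by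
  have ht2 := one_sub_sq_pos_of_abs_lt_one ht
  set s := √(1 - t ^ 2)
  have hs : 0 < s := sqrt_pos.mpr ht2
  have hs2 : s ^ 2 = 1 - t ^ 2 := sq_sqrt ht2.le
  refine ⟨t / (1 + s), ?_, ?_, ?_⟩
  · have h1s : 0 < 1 + s := by linarith
    rw [abs_div, abs_of_pos h1s, div_lt_one h1s]
    linarith
  · field_simp
    linear_combination (t * (1 + s) - t * s) * hs2
  · field_simp
    linear_combination (s + 1) * hs2

lemma integral_inv_one_sub_mul_cos (ht : |t| < 1) {a b : ℝ} (ha : sin a = 0) (hb : sin b = 0) :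
    ∫ φ in a..b, (1 - t * cos φ)⁻¹ = (b - a) / √(1 - t ^ 2) := by
  obtain ⟨m, hm, hmt, hms⟩ := exists_tan_half_angle ht
  have hs : 0 < √(1 - t ^ 2) := sqrt_pos.mpr (one_sub_sq_pos_of_abs_lt_one ht)
  have hkernel : ∀ φ, (1 - t * cos φ)⁻¹
      = (1 - m ^ 2) / (1 + m ^ 2 - 2 * m * cos φ) / √(1 - t ^ 2) := by
    intro φ
    rw [inv_eq_one_div, div_div, div_eq_div_iff (one_sub_mul_cos_pos ht φ).ne'
      (mul_pos (one_add_sq_sub_two_mul_cos_pos hm φ) hs).ne']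
    linear_combination (1 - t * cos φ) * hms + √(1 - t ^ 2) * cos φ * hmt
  simp only [hkernel, intervalIntegral.integral_div,
    integral_one_sub_sq_div_one_add_sq_sub_two_mul_cos hm ha hb]

lemma hasDerivAt_sin_div_one_sub_mul_cos (ht : |t| < 1) (φ : ℝ) :
    HasDerivAt (fun φ => sin φ / (1 - t * cos φ)) ((cos φ - t) / (1 - t * cos φ) ^ 2) φ := by
  refine ((hasDerivAt_sin φ).fun_div ((hasDerivAt_cos φ).const_mul t |>.const_sub 1)
    (one_sub_mul_cos_pos ht φ).ne').congr_deriv ?_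
  congr 1
  linear_combination (-t) * sin_sq_add_cos_sq φ

lemma continuous_div_one_sub_mul_cos_sq (ht : |t| < 1) {f : ℝ → ℝ} (hf : Continuous f) :
    Continuous fun φ => f φ / (1 - t * cos φ) ^ 2 :=
  hf.div (by fun_prop) fun φ => pow_ne_zero 2 (one_sub_mul_cos_pos ht φ).ne'

lemma integral_cos_sub_div_one_sub_mul_cos_sq (ht : |t| < 1) {a b : ℝ} (ha : sin a = 0)
    (hb : sin b = 0) : ∫ φ in a..b, (cos φ - t) / (1 - t * cos φ) ^ 2 = 0 := by
  rw [intervalIntegral.integral_eq_sub_of_hasDerivAt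
    (fun φ _ => hasDerivAt_sin_div_one_sub_mul_cos ht φ)
    ((continuous_div_one_sub_mul_cos_sq ht (by fun_prop)).intervalIntegrable a b)]
  simp [ha, hb]

lemma integral_one_sub_mul_cos_div_one_sub_mul_cos_sq (τ : ℝ) (ht : |t| < 1) {a b : ℝ}
    (ha : sin a = 0) (hb : sin b = 0) :
    ∫ φ in a..b, (1 - τ * cos φ) / (1 - t * cos φ) ^ 2
      = (b - a) * (1 - t * τ) / ((1 - t ^ 2) * √(1 - t ^ 2)) := by
  have ht2 := (one_sub_sq_pos_of_abs_lt_one ht).ne'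
  have hsplit : ∀ φ, (1 - τ * cos φ) / (1 - t * cos φ) ^ 2
      = (1 - t * τ) / (1 - t ^ 2) * (1 - t * cos φ)⁻¹
        + (t - τ) / (1 - t ^ 2) * ((cos φ - t) / (1 - t * cos φ) ^ 2) := by
    intro φ
    have := (one_sub_mul_cos_pos ht φ).ne'
    field_simp
    ring
  have hinv : Continuous fun φ => (1 - t * cos φ)⁻¹ :=
    (by fun_prop : Continuous fun φ => 1 - t * cos φ).inv₀ fun φ => (one_sub_mul_cos_pos ht φ).ne'
  simp only [hsplit]
  rw [intervalIntegral.integral_add ((hinv.intervalIntegrable a b).const_mul _)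
      (((continuous_div_one_sub_mul_cos_sq ht (by fun_prop)).intervalIntegrable a b).const_mul _),
    intervalIntegral.integral_const_mul, intervalIntegral.integral_const_mul,
    integral_inv_one_sub_mul_cos ht ha hb, integral_cos_sub_div_one_sub_mul_cos_sq ht ha hb,
    mul_zero, add_zero]
  field_simp

end

section

variable {a c : ℝ}

lemma abs_sq_sub_sq_div_sq_add_sq_lt_one (ha : a ≠ 0) (hc : c ≠ 0) :
    |(a ^ 2 - c ^ 2) / (a ^ 2 + c ^ 2)| < 1 := by
  have ha2 : 0 < a ^ 2 := by positivity
  have hc2 : 0 < c ^ 2 := by positivity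
  have hpos : 0 < a ^ 2 + c ^ 2 := by positivity
  rw [abs_div, abs_of_pos hpos, div_lt_one hpos, abs_sub_lt_iff]
  constructor <;> linarith

lemma one_sub_sq_sub_sq_div_sq_add_sq (h : a ^ 2 + c ^ 2 ≠ 0) :
    1 - ((a ^ 2 - c ^ 2) / (a ^ 2 + c ^ 2)) ^ 2 = (2 * a * c / (a ^ 2 + c ^ 2)) ^ 2 := by
  field_simp
  ring

end

theorem integral_one_sub_tau_cos_R_pow_four_general
    (τ a c : ℝ) (hc : 0 < c) (hca : c < a) :
    let τac : ℝ := (a ^ 2 - c ^ 2) / (a ^ 2 + c ^ 2)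
    (∫ θ in (-Real.pi)..Real.pi,
        (1 - τ * Real.cos (2 * θ)) *
          (Real.sqrt ((a ^ 2 + c ^ 2) / 2) * Real.sqrt (1 - τac ^ 2) /
            Real.sqrt (1 - τac * Real.cos (2 * θ))) ^ 4)
      = a * c * Real.pi * (a ^ 2 * (1 - τ) + c ^ 2 * (1 + τ)) := by
  intro τac
  have ha : 0 < a := hc.trans hca
  have hac : 0 < a ^ 2 + c ^ 2 := by positivity
  have ht := abs_sq_sub_sq_div_sq_add_sq_lt_one ha.ne' hc.ne'
  have hsqrt_pow_four : ∀ x : ℝ, 0 ≤ x → √x ^ 4 = x ^ 2 := fun x hx => by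
    rw [show 4 = 2 * 2 from rfl, pow_mul, sq_sqrt hx]
  have hR : ∀ θ, (1 - τ * cos (2 * θ)) * (√((a ^ 2 + c ^ 2) / 2) * √(1 - τac ^ 2) /
      √(1 - τac * cos (2 * θ))) ^ 4 = ((a ^ 2 + c ^ 2) / 2) ^ 2 * (1 - τac ^ 2) ^ 2 *
        ((1 - τ * cos (2 * θ)) / (1 - τac * cos (2 * θ)) ^ 2) := fun θ => by
    rw [div_pow, mul_pow, hsqrt_pow_four _ (by positivity),
      hsqrt_pow_four _ (one_sub_sq_pos_of_abs_lt_one ht).le,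
      hsqrt_pow_four _ (one_sub_mul_cos_pos ht _).le]
    ring
  simp only [hR, intervalIntegral.integral_const_mul]
  rw [intervalIntegral.integral_comp_mul_left (fun φ => (1 - τ * cos φ) / (1 - τac * cos φ) ^ 2)
      two_ne_zero,
    integral_one_sub_mul_cos_div_one_sub_mul_cos_sq τ ht (by simp) (by simp),
    one_sub_sq_sub_sq_div_sq_add_sq hac.ne', sqrt_sq (by positivity), smul_eq_mul]
  field_simp
  ring

/-- For every real `β > 0` and `τ ∈ [0,1)`, with `a > c > 0`,
`τ_{a,c} := (a²−c²)/(a²+c²)` and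
`R(θ) := √((a²+c²)/2)·√(1−τ_{a,c}²)/√(1−τ_{a,c} cos 2θ)`:
`∫_{-π}^{π} (1 − τ cos 2θ) R(θ)⁴ dθ = acπ(a²(1−τ) + c²(1+τ))`. -/
theorem integral_one_sub_tau_cos_R_pow_four
    (β τ a c : ℝ) (hβ : 0 < β) (hτ0 : 0 ≤ τ) (hτ1 : τ < 1) (hc : 0 < c) (hca : c < a) :
    let τac : ℝ := (a ^ 2 - c ^ 2) / (a ^ 2 + c ^ 2)
    (∫ θ in (-Real.pi)..Real.pi,
        (1 - τ * Real.cos (2 * θ)) *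
          (Real.sqrt ((a ^ 2 + c ^ 2) / 2) * Real.sqrt (1 - τac ^ 2) /
            Real.sqrt (1 - τac * Real.cos (2 * θ))) ^ 4)
      = a * c * Real.pi * (a ^ 2 * (1 - τ) + c ^ 2 * (1 + τ)) :=
  integral_one_sub_tau_cos_R_pow_four_general τ a c hc hca
end

section
/- Let κ = ∫_{ρ₁}^{ρ₂} dμ_rad(r) and λ = (κ log ρ₂ − ∫_{ρ₁}^{ρ₂} (log r) dμ_rad(r)) / (κ log(ρ₂/ρ₁)) for a finite positive Borel measure μ_rad on [ρ₁,ρ₂] with 0 < ρ₁ < ρ₂ and κ > 0. Define the measure ν on the two circles {|z| = ρ₁} ∪ {|z| = ρ₂} by dν = λκ dθ/(2π) on the inner circle and (1−λ)κ dθ/(2π) on the outer circle. Then for every z with |z| ≤ ρ₁, ∫ log|z−w|⁻¹ dν(w) = ∫_{ρ₁}^{ρ₂} (log(1/r)) dμ_rad(r), and for every z with |z| ≥ ρ₂, ∫ log|z−w|⁻¹ dν(w) = κ log(1/|z|). -/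
/-!
By the circle-average formula, the potential of the uniform probability measure on `{|w| = ρ}`
is `log (1/ρ)` inside the circle and `log (1/|z|)` outside it. Hence outside the annulus the
potential of `ν` is `κ log (1/|z|)` whatever `λ` is, while inside it is the constant
`-κ log ρ₂ + λ κ log (ρ₂/ρ₁)`, and `λ` is chosen exactly so that this constant equals
`-∫ log r dμ_rad`.
-/

open Real

namespace Real

variable {E : Type*} [NormedAddCommGroup E] [NormedSpace ℝ E] {f : ℂ → E} {c a : ℂ} {R : ℝ}

theorem circleAverage_eq_integral_neg_pi_pi :
    circleAverage f c R = (2 * π)⁻¹ • ∫ θ in (-π)..π, f (circleMap c R θ) := by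
  rw [circleAverage_eq_integral_add (-π),
    intervalIntegral.integral_comp_add_right (fun θ ↦ f (circleMap c R θ))]
  ring_nf

theorem circleAverage_log_norm_sub_const_of_abs_radius_le_norm (hR : R ≠ 0)
    (ha : |R| ≤ ‖c - a‖) : circleAverage (log ‖· - a‖) c R = log ‖c - a‖ := by
  have hRa : 1 ≤ |R⁻¹ * ‖c - a‖| := by
    rw [abs_mul, abs_inv, abs_norm]
    exact (one_le_inv_mul₀ (abs_pos.mpr hR)).mpr ha
  rw [circleAverage_log_norm_sub_const_eq_log_radius_add_posLog hR, posLog_eq_log hRa,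
    log_mul (inv_ne_zero hR) ((abs_pos.mpr hR).trans_le ha).ne', log_inv]
  ring

end Real

theorem integral_log_norm_sub_circle_inv_div_two_pi (z : ℂ) (R : ℝ) :
    (∫ θ in (-π)..π, log ‖z - (R : ℂ) * Complex.exp ((θ : ℂ) * Complex.I)‖⁻¹) / (2 * π)
      = -circleAverage (log ‖· - z‖) 0 R := by
  rw [circleAverage_eq_integral_neg_pi_pi, smul_eq_mul, inv_mul_eq_div, ← neg_div,
    ← intervalIntegral.integral_neg]
  congr with θ
  simp [circleMap, norm_sub_rev, log_inv]

open MeasureTheory in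
theorem balayage_annulus_potential_general (ρ₁ ρ₂ : ℝ) (h1 : 0 < ρ₁) (h12 : ρ₁ < ρ₂)
    (μ : Measure ℝ)
    (κ lam : ℝ) (hκ : 0 < κ)
    (hlam : lam = (κ * Real.log ρ₂ - ∫ r, Real.log r ∂μ) / (κ * Real.log (ρ₂ / ρ₁))) :
    (∀ z : ℂ, ‖z‖ ≤ ρ₁ →
      (lam * κ) * (∫ θ in (-Real.pi)..Real.pi,
          Real.log (‖z - (ρ₁ : ℂ) * Complex.exp ((θ : ℂ) * Complex.I)‖)⁻¹)
            / (2 * Real.pi)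
        + ((1 - lam) * κ) * (∫ θ in (-Real.pi)..Real.pi,
            Real.log (‖z - (ρ₂ : ℂ) * Complex.exp ((θ : ℂ) * Complex.I)‖)⁻¹)
              / (2 * Real.pi)
        = ∫ r, Real.log (1 / r) ∂μ) ∧
    (∀ z : ℂ, ρ₂ ≤ ‖z‖ →
      (lam * κ) * (∫ θ in (-Real.pi)..Real.pi,
          Real.log (‖z - (ρ₁ : ℂ) * Complex.exp ((θ : ℂ) * Complex.I)‖)⁻¹)
            / (2 * Real.pi)
        + ((1 - lam) * κ) * (∫ θ in (-Real.pi)..Real.pi,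
            Real.log (‖z - (ρ₂ : ℂ) * Complex.exp ((θ : ℂ) * Complex.I)‖)⁻¹)
              / (2 * Real.pi)
        = κ * Real.log (1 / ‖z‖)) := by
  have h2 : 0 < ρ₂ := h1.trans h12
  have hlog : Real.log (ρ₂ / ρ₁) = Real.log ρ₂ - Real.log ρ₁ := log_div h2.ne' h1.ne'
  have hlam' : lam * (κ * Real.log (ρ₂ / ρ₁)) = κ * Real.log ρ₂ - ∫ r, Real.log r ∂μ := by
    rw [hlam, div_mul_cancel₀]
    exact mul_ne_zero hκ.ne' (log_pos ((one_lt_div h1).mpr h12)).ne'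
  have hinv : ∫ r, Real.log (1 / r) ∂μ = -∫ r, Real.log r ∂μ := by
    simp only [one_div, log_inv, integral_neg]
  simp only [mul_div_assoc, integral_log_norm_sub_circle_inv_div_two_pi]
  constructor
  · intro z hz
    have hmem (ρ : ℝ) (hρ : ρ₁ ≤ ρ) : z ∈ Metric.closedBall 0 |ρ| := by
      simpa [abs_of_pos (h1.trans_le hρ)] using hz.trans hρ
    rw [circleAverage_log_norm_sub_const_of_mem_closedBall (hmem ρ₁ le_rfl),
      circleAverage_log_norm_sub_const_of_mem_closedBall (hmem ρ₂ h12.le), hinv]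
    linear_combination hlam' - lam * κ * hlog
  · intro z hz
    have hle (ρ : ℝ) (hρ0 : 0 < ρ) (hρ : ρ ≤ ρ₂) : |ρ| ≤ ‖0 - z‖ := by
      simpa [abs_of_pos hρ0] using hρ.trans hz
    rw [circleAverage_log_norm_sub_const_of_abs_radius_le_norm h1.ne' (hle ρ₁ h1 h12.le),
      circleAverage_log_norm_sub_const_of_abs_radius_le_norm h2.ne' (hle ρ₂ h2 le_rfl),
      zero_sub, norm_neg, one_div, log_inv]
    ring

open MeasureTheory in
/-- Let `0 < ρ₁ < ρ₂`, let `μ_rad` be a finite positive Borel measure concentrated on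
`[ρ₁,ρ₂]` with total mass `κ > 0`, and let
`λ = (κ log ρ₂ − ∫ log r dμ_rad)/(κ log(ρ₂/ρ₁))`. Let `ν` be the measure putting density
`λκ dθ/(2π)` on the circle `{|z| = ρ₁}` and `(1−λ)κ dθ/(2π)` on `{|z| = ρ₂}`. Then for
`|z| ≤ ρ₁`, `∫ log|z−w|⁻¹ dν(w) = ∫ log(1/r) dμ_rad`, and for `|z| ≥ ρ₂`,
`∫ log|z−w|⁻¹ dν(w) = κ log(1/|z|)`. -/
theorem balayage_annulus_potential (ρ₁ ρ₂ : ℝ) (h1 : 0 < ρ₁) (h12 : ρ₁ < ρ₂)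
    (μ : Measure ℝ) [IsFiniteMeasure μ] (hμ : μ (Set.Icc ρ₁ ρ₂)ᶜ = 0)
    (κ lam : ℝ) (hκdef : κ = (μ (Set.Icc ρ₁ ρ₂)).toReal) (hκ : 0 < κ)
    (hlam : lam = (κ * Real.log ρ₂ - ∫ r, Real.log r ∂μ) / (κ * Real.log (ρ₂ / ρ₁))) :
    (∀ z : ℂ, ‖z‖ ≤ ρ₁ →
      (lam * κ) * (∫ θ in (-Real.pi)..Real.pi,
          Real.log (‖z - (ρ₁ : ℂ) * Complex.exp ((θ : ℂ) * Complex.I)‖)⁻¹)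
            / (2 * Real.pi)
        + ((1 - lam) * κ) * (∫ θ in (-Real.pi)..Real.pi,
            Real.log (‖z - (ρ₂ : ℂ) * Complex.exp ((θ : ℂ) * Complex.I)‖)⁻¹)
              / (2 * Real.pi)
        = ∫ r, Real.log (1 / r) ∂μ) ∧
    (∀ z : ℂ, ρ₂ ≤ ‖z‖ →
      (lam * κ) * (∫ θ in (-Real.pi)..Real.pi,
          Real.log (‖z - (ρ₁ : ℂ) * Complex.exp ((θ : ℂ) * Complex.I)‖)⁻¹)
            / (2 * Real.pi)
        + ((1 - lam) * κ) * (∫ θ in (-Real.pi)..Real.pi,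
            Real.log (‖z - (ρ₂ : ℂ) * Complex.exp ((θ : ℂ) * Complex.I)‖)⁻¹)
              / (2 * Real.pi)
        = κ * Real.log (1 / ‖z‖)) :=
  balayage_annulus_potential_general ρ₁ ρ₂ h1 h12 μ κ lam hκ hlam
end

section
/- Let τ ∈ [0,1), x₀, y₀ ∈ ℝ, a > 0, and let ν be the measure on the circle {x₀+iy₀+ae^{iθ} : θ ∈ (−π,π]} with density dν = (a/(π(1−τ²)))[(1−τ²)/(2a) − a/2 − x₀(1−τ)cosθ − y₀(1+τ)sinθ + aτ cos(2θ)] dθ. Then ∫ Q dν = [x₀²(1−τ) + y₀²(1+τ) + a²(1 − x₀²(3−2τ)/(1+τ) − y₀²(3+2τ)/(1−τ)) − a⁴(1+τ²)/(1−τ²)]/(1−τ²), where Q(x+iy) = x²/(1+τ) + y²/(1−τ). -/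
/-!
On the circle `θ ↦ x₀ + a cos θ + i (y₀ + a sin θ)` both `Q` and the density are trigonometric
polynomials of degree two. Over a full period only the constant term of a trigonometric
polynomial survives, so the integral of their product is given by Parseval's formula
`π (2 c₀ d₀ + c₁ d₁ + s₁ e₁ + c₂ d₂ + s₂ e₂)` in their Fourier coefficients.
-/

open Real intervalIntegral

theorem integral_cos_nat_mul_eq_zero {k : ℕ} (hk : k ≠ 0) :
    ∫ θ in -π..π, cos (k * θ) = 0 := by
  rw [integral_comp_mul_left cos (Nat.cast_ne_zero.2 hk), integral_cos, mul_neg, sin_neg,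
    sin_nat_mul_pi, neg_zero, sub_zero, smul_zero]

theorem integral_sin_mul_eq_zero (k : ℝ) : ∫ θ in -π..π, sin (k * θ) = 0 := by
  rcases eq_or_ne k 0 with rfl | hk
  · simp
  · rw [integral_comp_mul_left sin hk, integral_sin, mul_neg, cos_neg, sub_self, smul_zero]

theorem integral_trigPolynomial {n : ℕ} (a₀ : ℝ) (a b : Fin n → ℝ) :
    ∫ θ in -π..π, (a₀ + ∑ k, (a k * cos ((k + 1 : ℕ) * θ) + b k * sin ((k + 1 : ℕ) * θ)))
      = 2 * π * a₀ := by
  have hharmonic : ∀ (k : Fin n) (f : ℝ → ℝ), Continuous f →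
      IntervalIntegrable (fun θ => f ((k + 1 : ℕ) * θ)) MeasureTheory.volume (-π) π :=
    fun k f hf => (hf.comp (continuous_const.mul continuous_id)).intervalIntegrable _ _
  have hterm : ∀ k : Fin n, IntervalIntegrable
      (fun θ => a k * cos ((k + 1 : ℕ) * θ) + b k * sin ((k + 1 : ℕ) * θ))
      MeasureTheory.volume (-π) π := fun k =>
    ((hharmonic k _ continuous_cos).const_mul _).add ((hharmonic k _ continuous_sin).const_mul _)
  rw [integral_add intervalIntegrable_const
      ((continuous_finsetSum _ fun k _ => by fun_prop).intervalIntegrable _ _),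
    integral_finsetSum fun k _ => hterm k]
  simp only [integral_const, integral_add ((hharmonic _ _ continuous_cos).const_mul _)
    ((hharmonic _ _ continuous_sin).const_mul _), integral_const_mul,
    integral_cos_nat_mul_eq_zero (Nat.succ_ne_zero _), integral_sin_mul_eq_zero, smul_eq_mul,
    mul_zero, add_zero, Finset.sum_const_zero]
  ring

noncomputable def trigPoly2 (c₀ c₁ s₁ c₂ s₂ θ : ℝ) : ℝ :=
  c₀ + c₁ * cos θ + s₁ * sin θ + c₂ * cos (2 * θ) + s₂ * sin (2 * θ)

theorem trigPoly2_mul_trigPoly2 (c₀ c₁ s₁ c₂ s₂ d₀ d₁ e₁ d₂ e₂ θ : ℝ) :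
    trigPoly2 c₀ c₁ s₁ c₂ s₂ θ * trigPoly2 d₀ d₁ e₁ d₂ e₂ θ
      = (c₀ * d₀ + (c₁ * d₁ + s₁ * e₁ + c₂ * d₂ + s₂ * e₂) / 2)
        + ∑ k, (![c₀ * d₁ + d₀ * c₁ + (c₁ * d₂ + c₂ * d₁ + s₁ * e₂ + s₂ * e₁) / 2,
                  c₀ * d₂ + d₀ * c₂ + (c₁ * d₁ - s₁ * e₁) / 2,
                  (c₁ * d₂ + c₂ * d₁ - s₁ * e₂ - s₂ * e₁) / 2,
                  (c₂ * d₂ - s₂ * e₂) / 2] k * cos ((k + 1 : ℕ) * θ)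
              + ![c₀ * e₁ + d₀ * s₁ + (c₁ * e₂ + s₂ * d₁ - s₁ * d₂ - c₂ * e₁) / 2,
                  c₀ * e₂ + d₀ * s₂ + (c₁ * e₁ + s₁ * d₁) / 2,
                  (s₁ * d₂ + c₂ * e₁ + c₁ * e₂ + s₂ * d₁) / 2,
                  (c₂ * e₂ + s₂ * d₂) / 2] k * sin ((k + 1 : ℕ) * θ)) := by
  have hcos4 : cos (4 * θ) = 2 * cos (2 * θ) ^ 2 - 1 := by
    rw [show 4 * θ = 2 * (2 * θ) by ring, cos_two_mul]
  have hsin4 : sin (4 * θ) = 2 * sin (2 * θ) * cos (2 * θ) := by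
    rw [show 4 * θ = 2 * (2 * θ) by ring, sin_two_mul]
  simp only [trigPoly2, Fin.sum_univ_four, Matrix.cons_val]
  norm_num
  rw [hcos4, hsin4, cos_three_mul, sin_three_mul, cos_two_mul, sin_two_mul]
  linear_combination (s₁ * e₁ + 2 * sin θ * (s₁ * d₂ + c₂ * e₁ + c₁ * e₂ + s₂ * d₁)
    + 2 * cos θ * (s₁ * e₂ + s₂ * e₁) + 4 * cos θ ^ 2 * s₂ * e₂) * sin_sq_add_cos_sq θ

theorem integral_trigPoly2_mul_trigPoly2 (c₀ c₁ s₁ c₂ s₂ d₀ d₁ e₁ d₂ e₂ : ℝ) :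
    ∫ θ in -π..π, trigPoly2 c₀ c₁ s₁ c₂ s₂ θ * trigPoly2 d₀ d₁ e₁ d₂ e₂ θ
      = π * (2 * c₀ * d₀ + c₁ * d₁ + s₁ * e₁ + c₂ * d₂ + s₂ * e₂) := by
  simp only [trigPoly2_mul_trigPoly2, integral_trigPolynomial]
  ring

/-- Let `τ ∈ [0,1)`, `x₀, y₀ ∈ ℝ`, `a > 0`, and let `ν` be the measure on the circle
`{x₀+iy₀+ae^{iθ}}` with density
`dν = (a/(π(1−τ²)))[(1−τ²)/(2a) − a/2 − x₀(1−τ)cosθ − y₀(1+τ)sinθ + aτ cos 2θ]dθ`.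
Then `∫ Q dν` equals
`[x₀²(1−τ) + y₀²(1+τ) + a²(1 − x₀²(3−2τ)/(1+τ) − y₀²(3+2τ)/(1−τ)) − a⁴(1+τ²)/(1−τ²)]/(1−τ²)`,
where `Q(x+iy) = x²/(1+τ) + y²/(1−τ)`. -/
theorem integral_Q_balayage_complement_disk
    (τ x₀ y₀ a : ℝ) (hτ0 : 0 ≤ τ) (hτ1 : τ < 1) (ha : 0 < a) :
    ∫ θ in (-Real.pi)..Real.pi,
        ((x₀ + a * Real.cos θ) ^ 2 / (1 + τ) + (y₀ + a * Real.sin θ) ^ 2 / (1 - τ)) *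
          (a / (Real.pi * (1 - τ ^ 2)) *
            ((1 - τ ^ 2) / (2 * a) - a / 2 - x₀ * (1 - τ) * Real.cos θ
              - y₀ * (1 + τ) * Real.sin θ + a * τ * Real.cos (2 * θ)))
      = (x₀ ^ 2 * (1 - τ) + y₀ ^ 2 * (1 + τ)
          + a ^ 2 * (1 - x₀ ^ 2 * (3 - 2 * τ) / (1 + τ) - y₀ ^ 2 * (3 + 2 * τ) / (1 - τ))
          - a ^ 4 * (1 + τ ^ 2) / (1 - τ ^ 2)) / (1 - τ ^ 2) := by
  have hp : 0 < 1 + τ := by linarith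
  have hm : 0 < 1 - τ := by linarith
  set K := a / (π * (1 - τ ^ 2))
  have hQ : ∀ θ, (x₀ + a * cos θ) ^ 2 / (1 + τ) + (y₀ + a * sin θ) ^ 2 / (1 - τ)
      = trigPoly2 ((x₀ ^ 2 + a ^ 2 / 2) / (1 + τ) + (y₀ ^ 2 + a ^ 2 / 2) / (1 - τ))
          (2 * a * x₀ / (1 + τ)) (2 * a * y₀ / (1 - τ))
          (a ^ 2 / 2 * (1 / (1 + τ) - 1 / (1 - τ))) 0 θ := by
    intro θ
    rw [trigPoly2, cos_two_mul]
    linear_combination a ^ 2 / (1 - τ) * sin_sq_add_cos_sq θ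
  have hdensity : ∀ θ, K * ((1 - τ ^ 2) / (2 * a) - a / 2 - x₀ * (1 - τ) * cos θ
      - y₀ * (1 + τ) * sin θ + a * τ * cos (2 * θ))
      = trigPoly2 (K * ((1 - τ ^ 2) / (2 * a) - a / 2)) (-(K * x₀ * (1 - τ)))
          (-(K * y₀ * (1 + τ))) (K * a * τ) 0 θ := by
    intro θ
    rw [trigPoly2]
    ring
  simp only [hQ, hdensity, integral_trigPoly2_mul_trigPoly2, K]
  have hm2 : 1 - τ ^ 2 ≠ 0 := by nlinarith
  field_simp
  ring
end
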